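/- arXiv:2002.08280 — 8 statements merged into one kernel-verified Lean document; each statement's English description precedes it below -/
import Mathlib

section
/- Let f₁, ..., fₙ : ℝ → M be monotone (non-decreasing) functions into a linearly ordered MV-algebra M (viewed as the interval [0,u] in a linearly ordered abelian group G). Then the function F(s₁,...,sₙ) = ⋀_{i=1}^n f_i(s_i) satisfies the volume condition: for all reals a_i ≤ b_i (i = 1,...,n), the alternating sum Σ_{φ ∈ {0,1}^n} sgn(φ) · ⋀_{i=1}^n x^i_{φ(i)} ≥ 0, where x^i_0 = f_i(a_i), x^i_1 = f_i(b_i), and sgn(φ) = +1 if |φ⁻¹(0)| is even and −1 otherwise (the sum is computed in G). -/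
/-!
Pick `j` maximising `fⱼ(aⱼ)` and pair each vertex `φ` of the box with the vertex toggled at
coordinate `j`; toggling flips the sign. If some other coordinate `i` of `φ` is `false`, the
minimum is already at most `fᵢ(aᵢ) ≤ fⱼ(aⱼ)`, so coordinate `j` does not matter and the pair
cancels. The only remaining pair, `φ = ⊤` and its neighbour at `j`, contributes a difference of
minima that is nonnegative by monotonicity. Summing over all `φ` counts each pair twice, and a
linearly ordered group is torsion-free.
-/

open Finset Function

section

variable {ι : Type*}

theorem Finset.inf'_le_inf'_of_forall_ne {α : Type*} [SemilatticeInf α] {s : Finset ι}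
    (hs : s.Nonempty) {y y' : ι → α} {i j : ι} (hi : i ∈ s) (hij : y i ≤ y' j)
    (h : ∀ k ≠ j, y k = y' k) : s.inf' hs y ≤ s.inf' hs y' :=
  le_inf' _ _ fun k hk => by
    rcases eq_or_ne k j with rfl | hkj
    · exact (inf'_le _ hi).trans hij
    · exact (inf'_le _ hk).trans_eq (h k hkj)

variable [DecidableEq ι]

def toggleAt (j : ι) : Equiv.Perm (ι → Bool) :=
  Involutive.toPerm (fun φ => update φ j !(φ j)) fun φ => by simp

theorem toggleAt_apply (j : ι) (φ : ι → Bool) : toggleAt j φ = update φ j !(φ j) := rfl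

@[simp]
theorem toggleAt_toggleAt (j : ι) (φ : ι → Bool) : toggleAt j (toggleAt j φ) = φ :=
  Involutive.toPerm_involutive _ φ

variable [Fintype ι]

theorem card_filter_update_false {φ : ι → Bool} {j : ι} (hj : φ j = true) :
    #{i | update φ j false i = false} = #{i | φ i = false} + 1 := by
  rw [← card_insert_of_notMem (s := {i | φ i = false}) (a := j) (by simp [hj])]
  congr 1
  ext k
  rcases eq_or_ne k j with rfl | hk <;> simp [*]

variable {G : Type*} [AddCommGroup G] [LinearOrder G] [IsOrderedAddMonoid G]

theorem inf'_volume_pair_nonneg (hne : (univ : Finset ι).Nonempty) {x : ι → Bool → G}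
    (hx : ∀ i, x i false ≤ x i true) {j : ι} (hj : ∀ i, x i false ≤ x j false) {φ : ι → Bool}
    (hφ : φ j = true) :
    0 ≤ (-1 : ℤ) ^ #{i | φ i = false} • univ.inf' hne (fun i => x i (φ i)) +
      (-1 : ℤ) ^ #{i | update φ j false i = false} •
        univ.inf' hne (fun i => x i (update φ j false i)) := by
  have hoff : ∀ k ≠ j, x k (update φ j false k) = x k (φ k) := fun k hk => by
    rw [update_of_ne hk]
  have hdown : univ.inf' hne (fun i => x i (update φ j false i)) ≤
      univ.inf' hne (fun i => x i (φ i)) :=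
    inf'_le_inf'_of_forall_ne hne (mem_univ j) (by simpa [hφ] using hx j) hoff
  rw [card_filter_update_false hφ, pow_succ, mul_neg_one, neg_smul, ← sub_eq_add_neg, ← smul_sub]
  by_cases hfalse : ∃ i, φ i = false
  · obtain ⟨i, hi⟩ := hfalse
    have hij : i ≠ j := by rintro rfl; simp_all
    have hup : univ.inf' hne (fun i => x i (φ i)) ≤
        univ.inf' hne (fun i => x i (update φ j false i)) :=
      inf'_le_inf'_of_forall_ne hne (mem_univ i) (by simpa [hi, hij] using hj i)
        fun k hk => (hoff k hk).symm
    rw [le_antisymm hup hdown, sub_self, smul_zero]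
  · have hcard : #{i | φ i = false} = 0 := by simpa using hfalse
    rw [hcard, pow_zero, one_smul, sub_nonneg]
    exact hdown

theorem inf'_volume_nonneg (hne : (univ : Finset ι).Nonempty) (x : ι → Bool → G)
    (hx : ∀ i, x i false ≤ x i true) :
    0 ≤ ∑ φ : ι → Bool, (-1 : ℤ) ^ #{i | φ i = false} • univ.inf' hne (fun i => x i (φ i)) := by
  obtain ⟨j, -, hj⟩ := exists_max_image univ (fun i => x i false) hne
  set vol := fun φ : ι → Bool =>
    (-1 : ℤ) ^ #{i | φ i = false} • univ.inf' hne (fun i => x i (φ i))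
  have hpair_of_true : ∀ φ, φ j = true → 0 ≤ vol φ + vol (toggleAt j φ) := fun φ hφ => by
    simpa [vol, toggleAt_apply, hφ] using
      inf'_volume_pair_nonneg hne hx (fun i => hj i (mem_univ i)) hφ
  have hpair_all : ∀ φ, 0 ≤ vol φ + vol (toggleAt j φ) := by
    intro φ
    cases hφ : φ j
    · have := hpair_of_true (toggleAt j φ) (by simp [toggleAt_apply, hφ])
      rwa [toggleAt_toggleAt, add_comm] at this
    · exact hpair_of_true φ hφ
  refine (nsmul_nonneg_iff two_ne_zero).1 ?_
  rw [two_nsmul]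
  nth_rewrite 2 [← Equiv.sum_comp (toggleAt j) vol]
  rw [← sum_add_distrib]
  exact sum_nonneg fun φ _ => hpair_all φ

end

theorem min_of_monotone_satisfies_volume_condition_general
    {G : Type*} [AddCommGroup G] [LinearOrder G] [IsOrderedAddMonoid G] {n : ℕ} (hn : 0 < n)
    (f : Fin n → ℝ → G) (hmono : ∀ i, Monotone (f i))
    (a b : Fin n → ℝ) (hab : ∀ i, a i ≤ b i) :
    0 ≤ ∑ φ : Fin n → Bool,
      (-1 : ℤ) ^ (Finset.univ.filter fun i => φ i = false).card •
        Finset.univ.inf' (Finset.univ_nonempty_iff.mpr (Fin.pos_iff_nonempty.mp hn))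
          (fun i => f i (if φ i then b i else a i)) :=
  inf'_volume_nonneg _ (fun i v => f i (if v then b i else a i)) fun i => by
    simpa using hmono i (hab i)

/-- Let `f₁,…,fₙ : ℝ → [0,u] ⊆ G` be monotone functions into a linearly ordered
abelian group `G`. Then `F(s₁,…,sₙ) = ⋀ᵢ fᵢ(sᵢ)` satisfies the volume condition:
for all `aᵢ ≤ bᵢ`, `Σ_{φ ∈ {0,1}ⁿ} sgn(φ) • ⋀ᵢ x^i_{φ(i)} ≥ 0`, where
`x^i_0 = fᵢ(aᵢ)`, `x^i_1 = fᵢ(bᵢ)` and `sgn(φ) = (-1)^{|φ⁻¹(0)|}`. -/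
theorem min_of_monotone_satisfies_volume_condition
    {G : Type*} [AddCommGroup G] [LinearOrder G] [IsOrderedAddMonoid G] {n : ℕ} (hn : 0 < n) (u : G)
    (f : Fin n → ℝ → G) (hmono : ∀ i, Monotone (f i))
    (hmem : ∀ i t, f i t ∈ Set.Icc (0 : G) u)
    (a b : Fin n → ℝ) (hab : ∀ i, a i ≤ b i) :
    0 ≤ ∑ φ : Fin n → Bool,
      (-1 : ℤ) ^ (Finset.univ.filter fun i => φ i = false).card •
        Finset.univ.inf' (Finset.univ_nonempty_iff.mpr (Fin.pos_iff_nonempty.mp hn))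
          (fun i => f i (if φ i then b i else a i)) :=
  min_of_monotone_satisfies_volume_condition_general hn f hmono a b hab
end

section
/- Let G be a linearly ordered abelian group, u ∈ G with 0 ≤ u, and let f₁, ..., fₙ : ℝ → [0,u] be monotone functions such that f₁(a₁) ≤ f₂(a₂) ≤ ... ≤ fₙ(aₙ) for given reals a_i ≤ b_i. Setting F(s₁,...,sₙ) = ⋀_{i=1}^n f_i(s_i), the full n-fold increment Δ₁(a₁,b₁)···Δₙ(aₙ,bₙ)F equals ⋀_{i=1}^{n-1}(f_i(b_i) ∧ fₙ(bₙ)) − ⋀_{i=1}^{n-1}(f_i(b_i) ∧ fₙ(aₙ)). -/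
/-!
Apply the last increment `Δₙ(aₙ,bₙ)` first. At a vertex `s` of the remaining `(n-1)`-block it
leaves `H(s) = M(s) ⊓ fₙ(bₙ) - M(s) ⊓ fₙ(aₙ)` with `M(s) = ⋀_{i<n} fᵢ(sᵢ)`. If some `sᵢ = aᵢ`, then
`M(s) ≤ fᵢ(aᵢ) ≤ fₙ(aₙ) ≤ fₙ(bₙ)`, so both meets equal `M(s)` and `H(s) = 0`. Hence the remaining
increments of `H` reduce to its value at the top vertex `(b₁,…,b_{n-1})`.
-/

open Finset

/-- The full increment `Δ₁⋯Δₙ` of a function given on the vertices of a block, where `φ i = true`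
selects the upper endpoint in coordinate `i`. -/
def alternatingVertexSum {ι G : Type*} [Fintype ι] [DecidableEq ι] [AddCommGroup G]
    (F : (ι → Bool) → G) : G :=
  ∑ φ, (-1 : ℤ) ^ #{i | φ i = false} • F φ

theorem Finset.inf'_inf_distrib_right {ι α : Type*} [SemilatticeInf α] {s : Finset ι}
    (hs : s.Nonempty) (g : ι → α) (c : α) :
    s.inf' hs g ⊓ c = s.inf' hs fun i => g i ⊓ c :=
  eq_of_forall_le_iff fun x => by
    simp only [le_inf'_iff, le_inf_iff, forall_and, hs.forall_const]

theorem Fin.inf'_univ_castSucc {α : Type*} [SemilatticeInf α] {n : ℕ} (hn : 0 < n)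
    (g : Fin (n + 1) → α) :
    univ.inf' univ_nonempty g =
      univ.inf' (univ_nonempty_iff.mpr (Fin.pos_iff_nonempty.mp hn)) (fun i => g i.castSucc) ⊓
        g (Fin.last n) :=
  eq_of_forall_le_iff fun x => by
    simp only [le_inf'_iff, le_inf_iff, mem_univ, forall_const, Fin.forall_fin_succ']

theorem Fin.card_filter_snoc_eq_false {n : ℕ} (ψ : Fin n → Bool) (c : Bool) :
    #{i | (Fin.snoc ψ c : Fin (n + 1) → Bool) i = false} =
      #{i | ψ i = false} + if c then 0 else 1 := by
  simp only [card_filter, Fin.sum_univ_castSucc, Fin.snoc_castSucc, Fin.snoc_last]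
  cases c <;> rfl

theorem alternatingVertexSum_snoc {G : Type*} [AddCommGroup G] {n : ℕ}
    (F : (Fin (n + 1) → Bool) → G) :
    alternatingVertexSum F =
      alternatingVertexSum fun ψ => F (Fin.snoc ψ true) - F (Fin.snoc ψ false) := by
  unfold alternatingVertexSum
  rw [← (Fin.snocEquiv fun _ => Bool).sum_comp, Fintype.sum_prod_type_right]
  refine Fintype.sum_congr _ _ fun ψ => ?_
  change ∑ c : Bool, (-1 : ℤ) ^ #{i | (Fin.snoc ψ c : Fin (n + 1) → Bool) i = false} •
    F (Fin.snoc ψ c) = _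
  rw [Fintype.sum_bool, Fin.card_filter_snoc_eq_false, Fin.card_filter_snoc_eq_false, smul_sub]
  simp [pow_succ, sub_eq_add_neg]

theorem alternatingVertexSum_eq_apply_true {ι G : Type*} [Fintype ι] [DecidableEq ι]
    [AddCommGroup G] (F : (ι → Bool) → G) (hF : ∀ φ, φ ≠ (fun _ => true) → F φ = 0) :
    alternatingVertexSum F = F fun _ => true := by
  rw [alternatingVertexSum, Fintype.sum_eq_single _ fun φ hφ => by rw [hF φ hφ, smul_zero]]
  simp

theorem alternatingVertexSum_inf'_eq {G : Type*} [AddCommGroup G] [SemilatticeInf G] {n : ℕ}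
    (hn : 0 < n) (g : Fin (n + 1) → Bool → G)
    (hg : ∀ j : Fin n, ∀ c, g j.castSucc false ≤ g (Fin.last n) c) :
    alternatingVertexSum (fun φ => univ.inf' univ_nonempty fun i => g i (φ i)) =
      univ.inf' (univ_nonempty_iff.mpr (Fin.pos_iff_nonempty.mp hn))
          (fun i => g i.castSucc true ⊓ g (Fin.last n) true) -
        univ.inf' (univ_nonempty_iff.mpr (Fin.pos_iff_nonempty.mp hn))
          (fun i => g i.castSucc true ⊓ g (Fin.last n) false) := by
  set I : (Fin n → Bool) → G := fun ψ =>
    univ.inf' (univ_nonempty_iff.mpr (Fin.pos_iff_nonempty.mp hn)) fun i => g i.castSucc (ψ i)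
  have hsplit : ∀ ψ c, univ.inf' univ_nonempty (fun i => g i (Fin.snoc ψ c i)) =
      I ψ ⊓ g (Fin.last n) c := by
    intro ψ c
    simp only [Fin.inf'_univ_castSucc hn, Fin.snoc_castSucc, Fin.snoc_last, I]
  rw [alternatingVertexSum_snoc, alternatingVertexSum_eq_apply_true]
  · simp only [hsplit, ← Finset.inf'_inf_distrib_right, I]
  · intro ψ hψ
    obtain ⟨j, hj⟩ : ∃ j, ψ j = false := by simpa [funext_iff] using hψ
    have hI : ∀ c, I ψ ≤ g (Fin.last n) c := fun c => (inf'_le _ (mem_univ j)).trans (hj ▸ hg j c)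
    simp only [hsplit, inf_eq_left.mpr (hI _), sub_self]

theorem volume_of_min_eq_inf_sub_inf_general
    {G : Type*} [AddCommGroup G] [LinearOrder G] {m : ℕ} (hm : 0 < m)
    (f : Fin (m + 1) → ℝ → G) (hmono : ∀ i, Monotone (f i))
    (a b : Fin (m + 1) → ℝ) (hab : ∀ i, a i ≤ b i)
    (hchain : ∀ i j : Fin (m + 1), i ≤ j → f i (a i) ≤ f j (a j)) :
    (∑ φ : Fin (m + 1) → Bool,
      (-1 : ℤ) ^ (Finset.univ.filter fun i => φ i = false).card •
        Finset.univ.inf' Finset.univ_nonempty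
          (fun i => f i (if φ i then b i else a i)))
    = Finset.univ.inf' (Finset.univ_nonempty_iff.mpr (Fin.pos_iff_nonempty.mp hm))
        (fun i : Fin m => f i.castSucc (b i.castSucc) ⊓ f (Fin.last m) (b (Fin.last m)))
      - Finset.univ.inf' (Finset.univ_nonempty_iff.mpr (Fin.pos_iff_nonempty.mp hm))
        (fun i : Fin m => f i.castSucc (b i.castSucc) ⊓ f (Fin.last m) (a (Fin.last m))) := by
  have hlast : ∀ t, a (Fin.last m) ≤ t → ∀ j : Fin m,
      f j.castSucc (a j.castSucc) ≤ f (Fin.last m) t := fun t ht j =>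
    (hchain _ _ (Fin.le_last _)).trans (hmono _ ht)
  exact alternatingVertexSum_inf'_eq hm (fun i c => f i (if c then b i else a i))
    fun j c => by cases c <;> exact hlast _ (by simp [hab]) j

/-- Let `G` be a linearly ordered abelian group, `0 ≤ u`, and `f₁,…,f_{m+1} : ℝ → [0,u]`
monotone with `f₁(a₁) ≤ ⋯ ≤ f_{m+1}(a_{m+1})`. With `F(s) = ⋀ᵢ fᵢ(sᵢ)`, the full iterated
increment `Δ₁(a₁,b₁)⋯Δ_{m+1}(a_{m+1},b_{m+1})F` (the alternating sum over the vertices)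
equals `⋀_{i≤m}(fᵢ(bᵢ) ⊓ f_{m+1}(b_{m+1})) − ⋀_{i≤m}(fᵢ(bᵢ) ⊓ f_{m+1}(a_{m+1}))`. -/
theorem volume_of_min_eq_inf_sub_inf
    {G : Type*} [AddCommGroup G] [LinearOrder G] [IsOrderedAddMonoid G] {m : ℕ} (hm : 0 < m) (u : G) (hu : (0 : G) ≤ u)
    (f : Fin (m + 1) → ℝ → G) (hmono : ∀ i, Monotone (f i))
    (hmem : ∀ i t, f i t ∈ Set.Icc (0 : G) u)
    (a b : Fin (m + 1) → ℝ) (hab : ∀ i, a i ≤ b i)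
    (hchain : ∀ i j : Fin (m + 1), i ≤ j → f i (a i) ≤ f j (a j)) :
    (∑ φ : Fin (m + 1) → Bool,
      (-1 : ℤ) ^ (Finset.univ.filter fun i => φ i = false).card •
        Finset.univ.inf' Finset.univ_nonempty
          (fun i => f i (if φ i then b i else a i)))
    = Finset.univ.inf' (Finset.univ_nonempty_iff.mpr (Fin.pos_iff_nonempty.mp hm))
        (fun i : Fin m => f i.castSucc (b i.castSucc) ⊓ f (Fin.last m) (b (Fin.last m)))
      - Finset.univ.inf' (Finset.univ_nonempty_iff.mpr (Fin.pos_iff_nonempty.mp hm))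
        (fun i : Fin m => f i.castSucc (b i.castSucc) ⊓ f (Fin.last m) (a (Fin.last m))) :=
  volume_of_min_eq_inf_sub_inf_general hm f hmono a b hab hchain
end

section
/- Let F be an n-dimensional spectral resolution on Γ(H,v) for a unital Dedekind monotone σ-complete po-group (H,v). Then for any distinct indices i₁,...,i_k ∈ {1,...,n} with 1 ≤ k < n and all reals a_{i_j} ≤ b_{i_j}, the partial iterated increments satisfy 0 ≤ Δ_{i₁}(a_{i₁},b_{i₁})···Δ_{i_k}(a_{i_k},b_{i_k})F(s₁,...,sₙ) ≤ v. -/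
variable {G : Type*} [AddCommGroup G] [PartialOrder G] [IsOrderedAddMonoid G]

/-- The difference operator `Δᵢ(a,b)H(s) = H(…,b,…) − H(…,a,…)` (substitution in the
`i`-th coordinate). -/
def delta {n : ℕ} (i : Fin n) (a b : ℝ) (H : (Fin n → ℝ) → G) : (Fin n → ℝ) → G :=
  fun s => H (Function.update s i b) - H (Function.update s i a)

/-- Iterated difference operators `Δ_{i₁}(a_{i₁},b_{i₁}) ⋯ Δ_{i_k}(a_{i_k},b_{i_k})`
for a list of indices `[i₁, …, i_k]`. -/
def deltaList {n : ℕ} (a b : Fin n → ℝ) : List (Fin n) → ((Fin n → ℝ) → G) → (Fin n → ℝ) → G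
  | [], H => H
  | i :: l, H => delta i (a i) (b i) (deltaList a b l H)

/-- `G` is Dedekind monotone σ-complete: every bounded monotone sequence has a
supremum. -/
def MonotoneSigmaComplete (G : Type*) [Preorder G] : Prop :=
  ∀ f : ℕ → G, Monotone f → BddAbove (Set.range f) → ∃ s, IsLUB (Set.range f) s

/-- `v` is a strong unit of `G`. -/
def IsStrongUnit (v : G) : Prop := ∀ g : G, ∃ k : ℕ, g ≤ k • v

/-- An `n`-dimensional spectral resolution on `Γ(G,v) = [0,v]`: monotone, with
supremum `v`, left-continuous, infimum `0` in each coordinate, and with nonnegative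
volumes. -/
def IsSpectralResolution {n : ℕ} (v : G) (F : (Fin n → ℝ) → G) : Prop :=
  (∀ s, F s ∈ Set.Icc (0 : G) v) ∧
  Monotone F ∧
  IsLUB (Set.range F) v ∧
  (∀ t : Fin n → ℝ, IsLUB (F '' {s | ∀ i, s i < t i}) (F t)) ∧
  (∀ (i : Fin n) (s : Fin n → ℝ), IsGLB (Set.range fun r => F (Function.update s i r)) 0) ∧
  (∀ a b : Fin n → ℝ, (∀ i, a i ≤ b i) → ∀ s,
    0 ≤ deltaList a b (List.ofFn (id : Fin n → Fin n)) F s)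

/-!
Removing one index `j` from a list `l` of distinct coordinates preserves nonnegativity of the
increments: `Δ_l F` is then monotone in the `j`-th coordinate, since its increments in that
coordinate are the `(j :: l)`-increments, and as that coordinate tends to `-∞` it is bounded
below by `-N`, where `N ≥ 0` is the sum of the corner values of `F` entering `Δ_l F` with
sign `-`; `N` has infimum `0` because every coordinate infimum of `F` is `0`. Starting from the
full volume condition, this gives `0 ≤ Δ_l F` for every list of distinct indices, and then
`Δ_{i :: l} F(s) ≤ Δ_l F(s[i ↦ b_i]) ≤ ⋯ ≤ F(…) ≤ v`.
-/

open Function Set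

section Increments

variable {A : Type*} [AddCommGroup A] {n : ℕ}

theorem delta_comm (i j : Fin n) (ai bi aj bj : ℝ) (F : (Fin n → ℝ) → A) :
    delta i ai bi (delta j aj bj F) = delta j aj bj (delta i ai bi F) := by
  funext s
  rcases eq_or_ne i j with rfl | hij
  · simp only [delta, update_idem]
    abel
  · simp only [delta, update_comm hij]
    abel

theorem deltaList_perm (a b : Fin n → ℝ) {l l' : List (Fin n)} (h : l.Perm l')
    (F : (Fin n → ℝ) → A) : deltaList a b l F = deltaList a b l' F := by
  induction h with
  | nil => rfl
  | cons i _ ih => simp only [deltaList, ih]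
  | swap i j l => simp only [deltaList, delta_comm]
  | trans _ _ ih₁ ih₂ => rw [ih₁, ih₂]

theorem deltaList_update_of_notMem {a b : Fin n → ℝ} {l : List (Fin n)} {j : Fin n}
    (hj : j ∉ l) (r t : ℝ) (F : (Fin n → ℝ) → A) :
    deltaList (update a j r) (update b j t) l F = deltaList a b l F := by
  induction l with
  | nil => rfl
  | cons i l ih =>
    have hij : i ≠ j := fun h => hj (h ▸ List.mem_cons_self)
    simp only [deltaList, update_of_ne hij, ih (fun h => hj (List.mem_cons_of_mem i h))]

/-- `deltaList a b l F s = P - N`, where `P` and `N` collect the values of `F` at the corners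
of the box entering with sign `+` and `-` respectively. -/
def deltaSplit (a b : Fin n → ℝ) : List (Fin n) → ((Fin n → ℝ) → A) → (Fin n → ℝ) → A × A
  | [], F, s => (F s, 0)
  | i :: l, F, s =>
      deltaSplit a b l F (update s i (b i)) + (deltaSplit a b l F (update s i (a i))).swap

theorem deltaList_eq_deltaSplit (a b : Fin n → ℝ) (l : List (Fin n)) (F : (Fin n → ℝ) → A)
    (s : Fin n → ℝ) :
    deltaList a b l F s = (deltaSplit a b l F s).1 - (deltaSplit a b l F s).2 := by
  induction l generalizing s with
  | nil => simp [deltaList, deltaSplit]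
  | cons i l ih =>
    simp only [deltaList, delta, deltaSplit, ih, Prod.fst_add, Prod.snd_add, Prod.fst_swap,
      Prod.snd_swap]
    abel

end Increments

theorem isGLB_range_add {α : Type*} [SemilatticeInf α] {f g : α → G} {x y : G}
    (hf : Monotone f) (hg : Monotone g)
    (hfx : IsGLB (range f) x) (hgy : IsGLB (range g) y) :
    IsGLB (range fun r => f r + g r) (x + y) := by
  refine ⟨?_, fun c hc => ?_⟩
  · rintro _ ⟨r, rfl⟩
    exact add_le_add (hfx.1 ⟨r, rfl⟩) (hgy.1 ⟨r, rfl⟩)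
  · have hc' : ∀ r t, c - g t ≤ f r := fun r t => sub_le_iff_le_add.2 <|
      (hc ⟨r ⊓ t, rfl⟩).trans (add_le_add (hf inf_le_left) (hg inf_le_right))
    have hcx : ∀ t, c - x ≤ g t := fun t =>
      sub_le_comm.1 (hfx.2 (by rintro _ ⟨r, rfl⟩; exact hc' r t))
    exact sub_le_iff_le_add'.1 (hgy.2 (by rintro _ ⟨t, rfl⟩; exact hcx t))

theorem isGLB_range_swap {ι α β : Type*} [Preorder α] [Preorder β] {f : ι → α × β} {p : α × β}
    (h : IsGLB (range f) p) : IsGLB (range fun i => (f i).swap) p.swap := by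
  have := (OrderIso.prodComm (α := α) (β := β)).isGLB_image (x := p.swap) |>.2 h
  rwa [← range_comp] at this

/-- `-f t ≤ -f r ≤ q r` for `r ≤ t`, and `q r` goes down to `0` as `r` decreases. -/
theorem nonneg_of_monotone_of_isGLB {α : Type*} [SemilatticeInf α] {f q : α → G} (hf : Monotone f)
    (hfq : ∀ r, 0 ≤ f r + q r) (hq : Monotone q) (hq0 : IsGLB (range q) 0) (t : α) :
    0 ≤ f t := by
  have : -f t ∈ lowerBounds (range q) := by
    rintro _ ⟨r, rfl⟩
    calc -f t ≤ -f (r ⊓ t) := neg_le_neg (hf inf_le_right)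
      _ ≤ q (r ⊓ t) := neg_le_iff_add_nonneg'.2 (hfq _)
      _ ≤ q r := hq inf_le_left
  exact neg_nonpos.1 (hq0.2 this)

section SpectralResolution

variable {n : ℕ} {F : (Fin n → ℝ) → G}

theorem monotone_deltaSplit (a b : Fin n → ℝ) (l : List (Fin n)) (hF : Monotone F) :
    Monotone (deltaSplit a b l F) := by
  induction l with
  | nil => exact fun s t hst => ⟨hF hst, le_rfl⟩
  | cons i l ih =>
    intro s t hst
    have hupd : ∀ c, update s i c ≤ update t i c := fun c =>
      update_le_update_iff.2 ⟨le_rfl, fun k _ => hst k⟩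
    exact add_le_add (ih (hupd _)) (Prod.swap_le_swap.2 (ih (hupd _)))

theorem isGLB_range_deltaSplit_update (a b : Fin n → ℝ) {l : List (Fin n)} (hF : Monotone F)
    (hF0 : ∀ i s, IsGLB (range fun r => F (update s i r)) 0) {j : Fin n} (hj : j ∉ l)
    (s : Fin n → ℝ) : IsGLB (range fun r => deltaSplit a b l F (update s j r)) 0 := by
  induction l generalizing s with
  | nil =>
    refine isGLB_prod.2 ⟨?_, ?_⟩
    · simpa [← range_comp, comp_def, deltaSplit] using hF0 j s
    · simp [← range_comp, comp_def, deltaSplit, isGLB_singleton]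
  | cons i l ih =>
    have hij : j ≠ i := fun h => hj (h ▸ List.mem_cons_self)
    have hjl : j ∉ l := fun h => hj (List.mem_cons_of_mem i h)
    have hmono : ∀ c, Monotone fun r => deltaSplit a b l F (update (update s i c) j r) :=
      fun c => (monotone_deltaSplit a b l hF).comp update_mono
    simp only [deltaSplit, update_comm hij]
    simpa using isGLB_range_add (hmono (b i)) (fun r t h => Prod.swap_le_swap.2 (hmono (a i) h))
      (ih hjl _) (isGLB_range_swap (ih hjl _))

def IncrementsNonneg (l : List (Fin n)) (F : (Fin n → ℝ) → G) : Prop :=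
  ∀ a b : Fin n → ℝ, (∀ i, a i ≤ b i) → ∀ s, 0 ≤ deltaList a b l F s

theorem IncrementsNonneg.of_cons {l : List (Fin n)} {j : Fin n} (hF : Monotone F)
    (hF0 : ∀ i s, IsGLB (range fun r => F (update s i r)) 0) (hj : j ∉ l)
    (h : IncrementsNonneg (j :: l) F) : IncrementsNonneg l F := by
  intro a b hab s
  have hmono : Monotone fun r => deltaList a b l F (update s j r) := by
    intro r t hrt
    have := h (update a j r) (update b j t) (update_le_update_iff.2 ⟨hrt, fun i _ => hab i⟩) s
    simpa [deltaList, delta, deltaList_update_of_notMem hj] using this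
  have hsplit := isGLB_range_deltaSplit_update a b hF hF0 hj s
  have hfst : ∀ r, 0 ≤ (deltaSplit a b l F (update s j r)).1 := fun r => (hsplit.1 ⟨r, rfl⟩).1
  simpa using nonneg_of_monotone_of_isGLB
    (q := fun r => (deltaSplit a b l F (update s j r)).2) hmono
    (fun r => by simpa [deltaList_eq_deltaSplit] using hfst r)
    (monotone_snd.comp ((monotone_deltaSplit a b l hF).comp update_mono))
    (by simpa [← range_comp, comp_def] using (isGLB_prod.1 hsplit).2) (s j)

theorem IncrementsNonneg.of_append {m l : List (Fin n)} (hF : Monotone F)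
    (hF0 : ∀ i s, IsGLB (range fun r => F (update s i r)) 0) (hml : (m ++ l).Nodup)
    (h : IncrementsNonneg (m ++ l) F) : IncrementsNonneg l F := by
  induction m with
  | nil => exact h
  | cons j m ih =>
    rw [List.cons_append, List.nodup_cons] at hml
    exact ih hml.2 (h.of_cons hF hF0 hml.1)

theorem incrementsNonneg_of_nodup {l : List (Fin n)} (hl : l.Nodup) (hF : Monotone F)
    (hF0 : ∀ i s, IsGLB (range fun r => F (update s i r)) 0)
    (hvol : IncrementsNonneg (List.ofFn id) F) : IncrementsNonneg l F := by
  obtain ⟨k, hkl, hk⟩ := hl.subperm (l₂ := List.ofFn id) fun i _ => List.mem_ofFn.2 ⟨i, rfl⟩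
  obtain ⟨m, hm⟩ := hk.exists_perm_append
  have hperm : (m ++ l).Perm (List.ofFn id) :=
    List.perm_append_comm.trans ((hkl.symm.append_right m).trans hm.symm)
  refine IncrementsNonneg.of_append hF hF0 (hperm.nodup_iff.2 (List.nodup_ofFn.2 injective_id)) ?_
  intro a b hab s
  rw [deltaList_perm a b hperm]
  exact hvol a b hab s

theorem deltaList_le_of_nodup {v : G} (hFv : ∀ s, F s ≤ v) {l : List (Fin n)} (hl : l.Nodup)
    (hnn : ∀ l' : List (Fin n), l'.Nodup → IncrementsNonneg l' F) (a b : Fin n → ℝ)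
    (hab : ∀ i, a i ≤ b i) (s : Fin n → ℝ) : deltaList a b l F s ≤ v := by
  induction l generalizing s with
  | nil => exact hFv s
  | cons i l ih =>
    calc deltaList a b (i :: l) F s
        = deltaList a b l F (update s i (b i)) - deltaList a b l F (update s i (a i)) := rfl
      _ ≤ deltaList a b l F (update s i (b i)) := sub_le_self _ (hnn l hl.of_cons a b hab _)
      _ ≤ v := ih hl.of_cons _

end SpectralResolution

theorem spectral_resolution_partial_increments_mem_Icc_general {n : ℕ} {H : Type*}
    [AddCommGroup H] [PartialOrder H] [IsOrderedAddMonoid H]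
    (v : H)
    (F : (Fin n → ℝ) → H) (hF : IsSpectralResolution v F)
    (l : List (Fin n)) (hnd : l.Nodup)
    (a b : Fin n → ℝ) (hab : ∀ i, a i ≤ b i) (s : Fin n → ℝ) :
    deltaList a b l F s ∈ Set.Icc (0 : H) v := by
  obtain ⟨hFv, hmono, -, -, hF0, hvol⟩ := hF
  have hnn : ∀ l' : List (Fin n), l'.Nodup → IncrementsNonneg l' F :=
    fun l' hl' => incrementsNonneg_of_nodup hl' hmono hF0 hvol
  exact ⟨hnn l hnd a b hab s, deltaList_le_of_nodup (fun s => (hFv s).2) hnd hnn a b hab s⟩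

/-- For an `n`-dimensional spectral resolution `F` on `Γ(H,v)` and distinct indices
`i₁,…,i_k` with `1 ≤ k < n`, the partial iterated increments satisfy
`0 ≤ Δ_{i₁}(a_{i₁},b_{i₁})⋯Δ_{i_k}(a_{i_k},b_{i_k})F(s) ≤ v`. -/
theorem spectral_resolution_partial_increments_mem_Icc {n : ℕ} {H : Type*}
    [AddCommGroup H] [PartialOrder H] [IsOrderedAddMonoid H]
    (hσc : MonotoneSigmaComplete H) (v : H) (hv : IsStrongUnit v)
    (F : (Fin n → ℝ) → H) (hF : IsSpectralResolution v F)
    (l : List (Fin n)) (hnd : l.Nodup) (hne : l ≠ []) (hlt : l.length < n)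
    (a b : Fin n → ℝ) (hab : ∀ i, a i ≤ b i) (s : Fin n → ℝ) :
    deltaList a b l F s ∈ Set.Icc (0 : H) v :=
  spectral_resolution_partial_increments_mem_Icc_general v F hF l hnd a b hab s
end

section
/- Let C be a cuboid in ℝⁿ, α a vertex of C, L a map defined on the vertices of C except α with values in an abelian po-group G, extended to L' by L'(α) = g. If α is of odd order in C, then the volume |C|_{L'} ≥ 0 holds iff |α − C|_L ≤ g; if α is of even order, then |C|_{L'} ≥ 0 holds iff g ≤ |α + C|_L. -/
/-- A cuboid in `ℝⁿ`, determined by reals `lo i ≤ hi i`; its dimension set is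
`{i | lo i < hi i}` and its vertices are the tuples with `i`-th coordinate in
`{lo i, hi i}`. -/
structure Cuboid (n : ℕ) where
  lo : Fin n → ℝ
  hi : Fin n → ℝ
  lo_le_hi : ∀ i, lo i ≤ hi i

namespace Cuboid

variable {n : ℕ}

/-- `i ∈ Dim(C)`. -/
def IsDim (C : Cuboid n) (i : Fin n) : Prop := C.lo i < C.hi i

/-- The admissible vertex selectors: on degenerate coordinates we take the (unique)
upper value. `φ i = true` selects `hi i`, `φ i = false` selects `lo i`. -/
def Allowed (C : Cuboid n) (φ : Fin n → Bool) : Prop := ∀ i, ¬C.IsDim i → φ i = true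

/-- The vertex of `C` selected by `φ`. -/
def vertex (C : Cuboid n) (φ : Fin n → Bool) : Fin n → ℝ :=
  fun i => if φ i then C.hi i else C.lo i

/-- The set of vertices of `C`, as points of `ℝⁿ`. -/
def vertexSet (C : Cuboid n) : Set (Fin n → ℝ) :=
  {p | ∃ φ, C.Allowed φ ∧ p = C.vertex φ}

/-- The upper facet `∂ᵢ(C)` (coordinate `i` fixed at `hi i`). -/
def upperFacet (C : Cuboid n) (i : Fin n) : Cuboid n :=
  ⟨Function.update C.lo i (C.hi i), C.hi, fun j => by
    rcases eq_or_ne j i with h | h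
    · subst h; simp
    · simpa [Function.update_of_ne h] using C.lo_le_hi j⟩

/-- The lower facet `∂'ᵢ(C)` (coordinate `i` fixed at `lo i`). -/
def lowerFacet (C : Cuboid n) (i : Fin n) : Cuboid n :=
  ⟨C.lo, Function.update C.hi i (C.lo i), fun j => by
    rcases eq_or_ne j i with h | h
    · subst h; simp
    · simpa [Function.update_of_ne h] using C.lo_le_hi j⟩

/-- The degenerate cuboid consisting of the single point `p`. -/
def pt (p : Fin n → ℝ) : Cuboid n := ⟨p, p, fun _ => le_rfl⟩

open scoped Classical in
/-- The finite set of admissible vertex selectors of `C`. -/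
noncomputable def allowedSet (C : Cuboid n) : Finset (Fin n → Bool) :=
  Finset.univ.filter fun φ => C.Allowed φ

/-- The number of lower coordinates chosen by `φ`; the order of the corresponding
vertex is `lowerCount φ + 1`. -/
def lowerCount {n : ℕ} (φ : Fin n → Bool) : ℕ :=
  (Finset.univ.filter fun i => φ i = false).card

/-- The "volume" `|C|_f = Σ_α (−1)^{ord_C(α)+1} f(α)` over the vertices of `C`. -/
noncomputable def vol {G : Type*} [AddCommGroup G] (C : Cuboid n)
    (f : (Fin n → ℝ) → G) : G :=
  ∑ φ ∈ C.allowedSet, (-1 : ℤ) ^ lowerCount φ • f (C.vertex φ)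

/-- The vertex expansion of `C` with the vertex selected by `φ₀` omitted. -/
noncomputable def volExcept {G : Type*} [AddCommGroup G] (C : Cuboid n)
    (φ₀ : Fin n → Bool) (f : (Fin n → ℝ) → G) : G :=
  ∑ φ ∈ C.allowedSet.erase φ₀, (-1 : ℤ) ^ lowerCount φ • f (C.vertex φ)

end Cuboid

/-
Distinct admissible selectors give distinct vertices, so changing the value at `α` to `g`
changes a single term of the vertex expansion: `|C|_{L'}` is `g - |α - C|_L` when `α` has odd
order and `|α + C|_L - g` when it has even order.
-/

namespace Cuboid

variable {n : ℕ}

theorem mem_allowedSet {C : Cuboid n} {φ : Fin n → Bool} : φ ∈ C.allowedSet ↔ C.Allowed φ := by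
  classical
  simp [allowedSet]

theorem vertex_injOn_allowed (C : Cuboid n) : Set.InjOn C.vertex {φ | C.Allowed φ} := by
  intro φ hφ ψ hψ h
  funext i
  by_cases hi : C.IsDim i
  · have hv : (if φ i then C.hi i else C.lo i) = if ψ i then C.hi i else C.lo i := congrFun h i
    revert hv
    cases φ i <;> cases ψ i <;> simp [hi.ne, hi.ne']
  · rw [hφ i hi, hψ i hi]

theorem vol_ite_vertex {G : Type*} [AddCommGroup G] (C : Cuboid n) {φ₀ : Fin n → Bool}
    (hφ₀ : C.Allowed φ₀) (L : (Fin n → ℝ) → G) (g : G) :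
    C.vol (fun p => if p = C.vertex φ₀ then g else L p) =
      (-1 : ℤ) ^ lowerCount φ₀ • g + C.volExcept φ₀ L := by
  classical
  rw [vol, ← Finset.add_sum_erase _ _ (mem_allowedSet.2 hφ₀), if_pos rfl, volExcept]
  congr 1
  refine Finset.sum_congr rfl fun ψ hψ => ?_
  obtain ⟨hne, hψ⟩ := Finset.mem_erase.1 hψ
  rw [if_neg fun h => hne (C.vertex_injOn_allowed (mem_allowedSet.1 hψ) hφ₀ h)]

end Cuboid

open Cuboid in
/-- Let `C` be a cuboid, `α = vertex φ₀` one of its vertices, `L` a map into a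
po-group `G`, and `L'` the extension with `L'(α) = g`. If `α` is of odd order then
`|C|_{L'} ≥ 0` iff `|α − C|_L ≤ g`; if `α` is of even order then `|C|_{L'} ≥ 0` iff
`g ≤ |α + C|_L`. -/
theorem volume_condition_iff_bound {n : ℕ} {G : Type*} [AddCommGroup G] [PartialOrder G] [IsOrderedAddMonoid G]
    (C : Cuboid n) (φ₀ : Fin n → Bool) (hφ₀ : C.Allowed φ₀)
    (L : (Fin n → ℝ) → G) (g : G) :
    (Odd (lowerCount φ₀ + 1) →
      (0 ≤ C.vol (fun p => if p = C.vertex φ₀ then g else L p) ↔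
        -(C.volExcept φ₀ L) ≤ g)) ∧
    (Even (lowerCount φ₀ + 1) →
      (0 ≤ C.vol (fun p => if p = C.vertex φ₀ then g else L p) ↔
        g ≤ C.volExcept φ₀ L)) := by
  rw [C.vol_ite_vertex hφ₀]
  constructor
  · intro hodd
    have hk : Even (lowerCount φ₀) := Nat.not_odd_iff_even.1 (Nat.odd_add_one.1 hodd)
    rw [hk.neg_one_pow, one_smul, neg_le_iff_add_nonneg]
  · intro heven
    have hk : Odd (lowerCount φ₀) := Nat.not_even_iff_odd.1 (Nat.even_add_one.1 heven)
    rw [hk.neg_one_pow, neg_one_smul, neg_add_eq_sub, sub_nonneg]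
end

section
/- Let C be a d-cuboid (d ≥ 1) in ℝⁿ, β a vertex of order 2 in C, and i ∈ Dim(C) the index such that β is the top vertex of ∂'_i(C). If L is a partial lift on the vertices C \ {β} with values in Γ(G,u), then u ≥ |C + β|_L ≥ |β − ∂'_i(C)|_L ≥ 0. -/
/-!
Write `β` for the vertex omitted from `C`. If `j` is a dimension of a cuboid `D ∋ β` in which
`β` takes the upper value, then `D = ∂ⱼD − ∂'ⱼD` and `∂'ⱼD` avoids `β`, so passing from `D` to
`∂ⱼD` can only increase the sum over the vertices of `D` other than `β`. Collapsing all such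
dimensions leaves the face spanned by `β` and the top vertex. For `D = C` this is the edge along
`i`, so `|C + β|_L ≤ L(top) ≤ u`; for `D = ∂'ᵢC`, whose top vertex is `β`, it is the point `β`,
so `|∂'ᵢC − β|_L ≤ 0`. The middle inequality is the identity `C + β = ∂ᵢC + (β − ∂'ᵢC)`
together with `|∂ᵢC|_L ≥ 0`.
-/

namespace Cuboid

variable {n : ℕ} {D : Cuboid n} {i j : Fin n} {φ : Fin n → Bool}

theorem mem_allowedSet_s9 : φ ∈ D.allowedSet ↔ D.Allowed φ := by
  classical
  simp [allowedSet]

theorem vertex_mem_vertexSet (h : D.Allowed φ) : D.vertex φ ∈ D.vertexSet := ⟨φ, h, rfl⟩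

theorem vertex_top (D : Cuboid n) : D.vertex (fun _ => true) = D.hi := rfl

theorem lowerCount_top : lowerCount (fun _ : Fin n => true) = 0 := by
  simp [lowerCount]

theorem lowerCount_update_true (h : φ j = false) :
    lowerCount φ = lowerCount (Function.update φ j true) + 1 := by
  classical
  have hfalse : (Finset.univ.filter fun k => Function.update φ j true k = false)
      = (Finset.univ.filter fun k => φ k = false).erase j := by
    ext k
    rcases eq_or_ne k j with rfl | hkj
    · simp
    · simp [hkj]
  rw [lowerCount, lowerCount, hfalse, Finset.card_erase_add_one (by simpa using h)]

theorem lowerCount_decide_ne (i : Fin n) : lowerCount (fun j => decide (j ≠ i)) = 1 := by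
  classical
  have : (Finset.univ.filter fun j : Fin n => decide (j ≠ i) = false) = {i} := by
    ext k
    simp
  rw [lowerCount, this, Finset.card_singleton]

theorem allowed_decide_ne (hi : D.IsDim i) : D.Allowed fun j => decide (j ≠ i) := by
  intro k hk
  have : k ≠ i := fun h => hk (h ▸ hi)
  simp [this]

theorem isDim_upperFacet : (D.upperFacet j).IsDim i ↔ i ≠ j ∧ D.IsDim i := by
  rcases eq_or_ne i j with rfl | h
  · simp [IsDim, upperFacet]
  · simp [IsDim, upperFacet, h]

theorem isDim_lowerFacet : (D.lowerFacet j).IsDim i ↔ i ≠ j ∧ D.IsDim i := by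
  rcases eq_or_ne i j with rfl | h
  · simp [IsDim, lowerFacet]
  · simp [IsDim, lowerFacet, h]

theorem allowed_upperFacet : (D.upperFacet j).Allowed φ ↔ D.Allowed φ ∧ φ j = true := by
  simp only [Allowed, isDim_upperFacet, not_and_or, not_not]
  refine ⟨fun h => ⟨fun k hk => h k (Or.inr hk), h j (Or.inl rfl)⟩, ?_⟩
  rintro ⟨h, hj⟩ k (rfl | hk)
  exacts [hj, h k hk]

theorem allowed_lowerFacet : (D.lowerFacet j).Allowed φ ↔ D.Allowed φ ∧ φ j = true := by
  simp only [Allowed, isDim_lowerFacet, not_and_or, not_not]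
  refine ⟨fun h => ⟨fun k hk => h k (Or.inr hk), h j (Or.inl rfl)⟩, ?_⟩
  rintro ⟨h, hj⟩ k (rfl | hk)
  exacts [hj, h k hk]

theorem vertex_upperFacet (φ : Fin n → Bool) :
    (D.upperFacet j).vertex φ = D.vertex (Function.update φ j true) := by
  funext k
  rcases eq_or_ne k j with rfl | h
  · simp [vertex, upperFacet]
  · simp [vertex, upperFacet, Function.update_of_ne h]

theorem vertex_lowerFacet (φ : Fin n → Bool) :
    (D.lowerFacet j).vertex φ = D.vertex (Function.update φ j false) := by
  funext k
  rcases eq_or_ne k j with rfl | h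
  · simp [vertex, lowerFacet]
  · simp [vertex, lowerFacet, Function.update_of_ne h]

theorem vertex_upperFacet_of_true (h : φ j = true) : (D.upperFacet j).vertex φ = D.vertex φ := by
  rw [vertex_upperFacet, Function.update_eq_self_iff.2 h.symm]

theorem vertexSet_upperFacet_subset : (D.upperFacet j).vertexSet ⊆ D.vertexSet := by
  rintro p ⟨φ, hφ, rfl⟩
  rw [allowed_upperFacet] at hφ
  exact ⟨φ, hφ.1, vertex_upperFacet_of_true hφ.2⟩

theorem vertexSet_lowerFacet_subset (hj : D.IsDim j) :
    (D.lowerFacet j).vertexSet ⊆ D.vertexSet := by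
  rintro p ⟨φ, hφ, rfl⟩
  refine ⟨Function.update φ j false, fun k hk => ?_, vertex_lowerFacet φ⟩
  rw [Function.update_of_ne (by rintro rfl; exact hk hj)]
  exact (allowed_lowerFacet.1 hφ).1 k hk

theorem vertex_notMem_vertexSet_upperFacet (hj : D.IsDim j) (h : φ j = false) :
    D.vertex φ ∉ (D.upperFacet j).vertexSet := by
  rintro ⟨ψ, -, hψ⟩
  have := congrFun hψ j
  cases hψj : ψ j <;> simp_all [vertex, upperFacet, hj.ne]

theorem vertex_notMem_vertexSet_lowerFacet (hj : D.IsDim j) (h : φ j = true) :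
    D.vertex φ ∉ (D.lowerFacet j).vertexSet := by
  rintro ⟨ψ, -, hψ⟩
  have := congrFun hψ j
  cases hψj : ψ j <;> simp_all [vertex, lowerFacet, hj.ne']

def topFace (D : Cuboid n) (φ : Fin n → Bool) : Cuboid n :=
  ⟨D.vertex φ, D.hi, fun j => by unfold vertex; split <;> simp [D.lo_le_hi]⟩

theorem isDim_topFace : (D.topFace φ).IsDim j ↔ D.IsDim j ∧ φ j = false := by
  cases h : φ j <;> simp [IsDim, topFace, vertex, h]

theorem topFace_upperFacet (h : φ j = true) : (D.upperFacet j).topFace φ = D.topFace φ := by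
  simp only [topFace, vertex_upperFacet_of_true h]
  rfl

theorem topFace_eq_self (h : ∀ j, D.IsDim j → φ j = false) : D.topFace φ = D := by
  show (⟨D.vertex φ, D.hi, _⟩ : Cuboid n) = ⟨D.lo, D.hi, D.lo_le_hi⟩
  congr 1
  funext j
  by_cases hj : D.IsDim j
  · simp [vertex, h j hj]
  · unfold vertex
    split
    · exact (D.lo_le_hi j).eq_of_not_lt hj |>.symm
    · rfl

theorem allowedSet_eq_singleton_top (h : ∀ j, ¬D.IsDim j) :
    D.allowedSet = {fun _ => true} := by
  ext φ
  simp only [mem_allowedSet_s9, Finset.mem_singleton]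
  exact ⟨fun hφ => funext fun j => hφ j (h j), fun hφ j _ => hφ ▸ rfl⟩

theorem vertexSet_pt (p : Fin n → ℝ) : (pt p).vertexSet = {p} := by
  ext q
  have hpt : ∀ j, ¬(pt p).IsDim j := fun j => lt_irrefl (p j)
  simp only [vertexSet, ← mem_allowedSet_s9, allowedSet_eq_singleton_top hpt,
    Finset.mem_singleton, exists_eq_left, vertex_top, Set.mem_singleton_iff]
  rfl

theorem vertex_lowerFacet_top (i : Fin n) :
    (D.lowerFacet i).vertex (fun _ => true) = D.vertex fun j => decide (j ≠ i) := by
  rw [vertex_lowerFacet]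
  congr 1
  funext k
  rcases eq_or_ne k i with rfl | hki
  · simp
  · simp [hki]

section Volume

variable {G : Type*} [AddCommGroup G] (f : (Fin n → ℝ) → G)

theorem vol_eq_vol_upperFacet_sub_vol_lowerFacet (hj : D.IsDim j) :
    D.vol f = (D.upperFacet j).vol f - (D.lowerFacet j).vol f := by
  classical
  have hup : (D.upperFacet j).vol f = ∑ φ ∈ D.allowedSet with φ j = true,
      (-1 : ℤ) ^ lowerCount φ • f (D.vertex φ) := by
    refine Finset.sum_congr (by ext; simp [mem_allowedSet_s9, allowed_upperFacet]) fun φ hφ => ?_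
    rw [vertex_upperFacet_of_true (Finset.mem_filter.1 hφ).2]
  -- flipping coordinate `j` to `true` matches the lower vertices of `D` with the vertices
  -- of `∂'ⱼ D`, and costs one sign
  have hlow : ∑ φ ∈ D.allowedSet with ¬φ j = true, (-1 : ℤ) ^ lowerCount φ • f (D.vertex φ)
      = -(D.lowerFacet j).vol f := by
    rw [vol, ← Finset.sum_neg_distrib]
    refine Finset.sum_nbij' (Function.update · j true) (Function.update · j false)
      ?_ ?_ ?_ ?_ ?_
    · intro φ hφ
      simp only [Finset.mem_filter, mem_allowedSet_s9] at hφ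
      simp only [mem_allowedSet_s9, allowed_lowerFacet, Function.update_self, and_true]
      intro k hk
      rw [Function.update_of_ne (by rintro rfl; exact hk hj)]
      exact hφ.1 k hk
    · intro ψ hψ
      simp only [mem_allowedSet_s9, allowed_lowerFacet] at hψ
      simp only [Finset.mem_filter, mem_allowedSet_s9, Function.update_self]
      refine ⟨fun k hk => ?_, Bool.false_ne_true⟩
      rw [Function.update_of_ne (by rintro rfl; exact hk hj)]
      exact hψ.1 k hk
    · intro φ hφ
      simp only [Finset.mem_filter, Bool.not_eq_true] at hφ
      simp [hφ.2]
    · intro ψ hψ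
      simp only [mem_allowedSet_s9, allowed_lowerFacet] at hψ
      simp [hψ.2]
    · intro φ hφ
      simp only [Finset.mem_filter, Bool.not_eq_true] at hφ
      have hflip : Function.update (Function.update φ j true) j false = φ := by
        rw [Function.update_idem, Function.update_eq_self_iff.2 hφ.2.symm]
      rw [vertex_lowerFacet, hflip, lowerCount_update_true hφ.2, pow_succ, mul_neg_one,
        neg_smul]
  rw [vol, ← Finset.sum_filter_add_sum_filter_not _ (fun φ => φ j = true), hup, hlow,
    sub_eq_add_neg]

theorem volExcept_eq_vol_sub (hφ : D.Allowed φ) :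
    D.volExcept φ f = D.vol f - (-1 : ℤ) ^ lowerCount φ • f (D.vertex φ) :=
  eq_sub_of_add_eq (Finset.sum_erase_add _ _ (mem_allowedSet_s9.2 hφ))

theorem vol_eq_of_forall_not_isDim (h : ∀ j, ¬D.IsDim j) : D.vol f = f D.hi := by
  rw [vol, allowedSet_eq_singleton_top h, Finset.sum_singleton, lowerCount_top, pow_zero,
    one_smul, vertex_top]

theorem vol_pt (p : Fin n → ℝ) : (pt p).vol f = f p :=
  vol_eq_of_forall_not_isDim f fun j => lt_irrefl (p j)

theorem volExcept_top_eq_zero (h : ∀ j, ¬D.IsDim j) : D.volExcept (fun _ => true) f = 0 := by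
  rw [volExcept, allowedSet_eq_singleton_top h, Finset.erase_singleton, Finset.sum_empty]

theorem volExcept_eq_volExcept_upperFacet_sub (hj : D.IsDim j) (hφ : D.Allowed φ)
    (h : φ j = true) :
    D.volExcept φ f = (D.upperFacet j).volExcept φ f - (D.lowerFacet j).vol f := by
  rw [volExcept_eq_vol_sub f hφ, volExcept_eq_vol_sub f (allowed_upperFacet.2 ⟨hφ, h⟩),
    vertex_upperFacet_of_true h, vol_eq_vol_upperFacet_sub_vol_lowerFacet f hj]
  abel

theorem volExcept_decide_ne_eq (hi : D.IsDim i) :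
    D.volExcept (fun j => decide (j ≠ i)) f
      = (D.upperFacet i).vol f - (D.lowerFacet i).volExcept (fun _ => true) f := by
  rw [volExcept_eq_vol_sub f (allowed_decide_ne hi), volExcept_eq_vol_sub f fun _ _ => rfl,
    lowerCount_decide_ne, lowerCount_top, vertex_lowerFacet_top,
    vol_eq_vol_upperFacet_sub_vol_lowerFacet f hi]
  simp only [pow_one, pow_zero, neg_smul, one_smul]
  abel

theorem volExcept_decide_ne_of_isDim_iff (h : ∀ j, D.IsDim j ↔ j = i) :
    D.volExcept (fun j => decide (j ≠ i)) f = f D.hi := by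
  have hi : D.IsDim i := (h i).2 rfl
  have hflat : ∀ j, ¬(D.lowerFacet i).IsDim j := fun j hj =>
    (isDim_lowerFacet.1 hj).1 ((h j).1 (isDim_lowerFacet.1 hj).2)
  rw [volExcept_decide_ne_eq f hi, volExcept_top_eq_zero f hflat,
    vol_eq_of_forall_not_isDim f fun j hj =>
      (isDim_upperFacet.1 hj).1 ((h j).1 (isDim_upperFacet.1 hj).2),
    sub_zero]
  rfl

end Volume

theorem volExcept_le_volExcept_topFace {G : Type*} [AddCommGroup G] [PartialOrder G]
    [IsOrderedAddMonoid G] {f : (Fin n → ℝ) → G} (hφ : D.Allowed φ)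
    (hf : ∀ E : Cuboid n, E.vertexSet ⊆ D.vertexSet \ {D.vertex φ} → 0 ≤ E.vol f) :
    D.volExcept φ f ≤ (D.topFace φ).volExcept φ f := by
  classical
  obtain ⟨k, hk⟩ : ∃ k, (Finset.univ.filter fun j => D.IsDim j ∧ φ j = true).card = k :=
    ⟨_, rfl⟩
  induction k generalizing D with
  | zero =>
    rw [topFace_eq_self (by simpa using Finset.card_eq_zero.1 hk)]
  | succ k ih =>
    obtain ⟨j, hj⟩ : (Finset.univ.filter fun j => D.IsDim j ∧ φ j = true).Nonempty :=
      Finset.card_pos.1 (by omega)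
    obtain ⟨hjdim, hφj⟩ := (Finset.mem_filter.1 hj).2
    have hlower : 0 ≤ (D.lowerFacet j).vol f := hf _ fun p hp =>
      ⟨vertexSet_lowerFacet_subset hjdim hp,
        fun hpφ => vertex_notMem_vertexSet_lowerFacet hjdim hφj
          (Set.mem_singleton_iff.1 hpφ ▸ hp)⟩
    have hupper : (D.upperFacet j).volExcept φ f ≤ (D.topFace φ).volExcept φ f := by
      rw [← topFace_upperFacet hφj]
      refine ih (allowed_upperFacet.2 ⟨hφ, hφj⟩) (fun E hE => hf E ?_) ?_
      · rw [vertex_upperFacet_of_true hφj] at hE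
        exact hE.trans (Set.sdiff_subset_sdiff_left vertexSet_upperFacet_subset)
      · have : (Finset.univ.filter fun i => (D.upperFacet j).IsDim i ∧ φ i = true)
            = (Finset.univ.filter fun i => D.IsDim i ∧ φ i = true).erase j := by
          ext i
          simp [isDim_upperFacet, and_assoc]
        rw [this, Finset.card_erase_of_mem hj, hk, Nat.add_sub_cancel]
    calc D.volExcept φ f
        = (D.upperFacet j).volExcept φ f - (D.lowerFacet j).vol f :=
          volExcept_eq_volExcept_upperFacet_sub f hjdim hφ hφj
      _ ≤ (D.upperFacet j).volExcept φ f := sub_le_self _ hlower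
      _ ≤ (D.topFace φ).volExcept φ f := hupper

end Cuboid

open Cuboid in
theorem order_two_vertex_bounds_general {n : ℕ} {G : Type*} [AddCommGroup G] [PartialOrder G] [IsOrderedAddMonoid G] (u : G)
    (C : Cuboid n) (i : Fin n) (hdim : C.IsDim i)
    (L : (Fin n → ℝ) → G)
    (hlift : ∀ D : Cuboid n,
      D.vertexSet ⊆ C.vertexSet \ {C.vertex fun j => decide (j ≠ i)} →
        D.vol L ∈ Set.Icc (0 : G) u) :
    C.volExcept (fun j => decide (j ≠ i)) L ≤ u ∧
    -((C.lowerFacet i).volExcept (fun _ => true) L) ≤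
      C.volExcept (fun j => decide (j ≠ i)) L ∧
    0 ≤ -((C.lowerFacet i).volExcept (fun _ => true) L) := by
  have hnonneg : ∀ E : Cuboid n,
      E.vertexSet ⊆ C.vertexSet \ {C.vertex fun j => decide (j ≠ i)} → 0 ≤ E.vol L :=
    fun E hE => (hlift E hE).1
  have hupper : C.volExcept (fun j => decide (j ≠ i)) L ≤ L C.hi :=
    (volExcept_le_volExcept_topFace (allowed_decide_ne hdim) hnonneg).trans_eq <|
      volExcept_decide_ne_of_isDim_iff L fun j => by
        simp only [isDim_topFace, decide_eq_false_iff_not, not_not, and_iff_right_iff_imp]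
        rintro rfl
        exact hdim
  have htop : L C.hi ≤ u := by
    refine vol_pt L C.hi ▸ (hlift (pt C.hi) ?_).2
    rw [vertexSet_pt, Set.singleton_subset_iff]
    refine ⟨vertex_mem_vertexSet (fun _ _ => rfl), fun h => ?_⟩
    exact hdim.ne' (by simpa [vertex] using congrFun (Set.mem_singleton_iff.1 h) i)
  have hlower : (C.lowerFacet i).volExcept (fun _ => true) L ≤ 0 := by
    refine (volExcept_le_volExcept_topFace (fun _ _ => rfl) fun E hE => hnonneg E ?_).trans_eq
      (volExcept_top_eq_zero L fun j => by simp [isDim_topFace])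
    rw [vertex_lowerFacet_top] at hE
    exact hE.trans (Set.sdiff_subset_sdiff_left (vertexSet_lowerFacet_subset hdim))
  have hface : 0 ≤ (C.upperFacet i).vol L := hnonneg _ fun p hp =>
    ⟨vertexSet_upperFacet_subset hp,
      fun h => vertex_notMem_vertexSet_upperFacet hdim (by simp)
        (Set.mem_singleton_iff.1 h ▸ hp)⟩
  refine ⟨hupper.trans htop, ?_, neg_nonneg.2 hlower⟩
  rw [volExcept_decide_ne_eq L hdim, sub_eq_add_neg]
  exact le_add_of_nonneg_left hface

open Cuboid in
/-- Let `C` be a `d`-cuboid (`d ≥ 1`), `β` the vertex of order `2` having its lower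
value exactly at coordinate `i ∈ Dim(C)` (so `β` is the top vertex of `∂'ᵢ(C)`), and
`L` a partial lift with values in `Γ(G,u)` defined on the vertices of `C` other than
`β`. Then `u ≥ |C + β|_L ≥ |β − ∂'ᵢ(C)|_L ≥ 0`. -/
theorem order_two_vertex_bounds {n : ℕ} {G : Type*} [AddCommGroup G] [PartialOrder G] [IsOrderedAddMonoid G] (u : G)
    (C : Cuboid n) (i : Fin n) (hdim : C.IsDim i)
    (L : (Fin n → ℝ) → G)
    (hval : ∀ p ∈ C.vertexSet \ {C.vertex fun j => decide (j ≠ i)},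
      L p ∈ Set.Icc (0 : G) u)
    (hlift : ∀ D : Cuboid n,
      D.vertexSet ⊆ C.vertexSet \ {C.vertex fun j => decide (j ≠ i)} →
        D.vol L ∈ Set.Icc (0 : G) u) :
    C.volExcept (fun j => decide (j ≠ i)) L ≤ u ∧
    -((C.lowerFacet i).volExcept (fun _ => true) L) ≤
      C.volExcept (fun j => decide (j ≠ i)) L ∧
    0 ≤ -((C.lowerFacet i).volExcept (fun _ => true) L) :=
  order_two_vertex_bounds_general u C i hdim L hlift
end

section
/- Let C be a cuboid and F a collection of its facets such that for each i ∈ Dim(C), at least one of ∂_i(C), ∂'_i(C) does not belong to F. Then every sub-cuboid D of C with D ⊆ ⋃F is contained in some single facet belonging to F. -/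
/-
Take the vertex `p` of `D` which, in each direction `i` of `D`, lies on the lower side of `D`
if `∂ᵢ(C) ∈ F` and on the upper side otherwise. Some facet of `F`, in direction `i` say,
contains `p`. If `D` extended in direction `i`, then `p` would sit on the side of `D` facing
away from that facet (for `∂'ᵢ(C) ∈ F` because `∂ᵢ(C) ∉ F`), which is impossible inside `C`.
So `D` is flat in direction `i`, and all of it lies in that facet together with `p`.
-/

namespace Cuboid

variable {n : ℕ}

theorem mem_vertexSet_iff {C : Cuboid n} {p : Fin n → ℝ} :
    p ∈ C.vertexSet ↔ ∀ i, p i = C.lo i ∨ p i = C.hi i := by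
  classical
  constructor
  · rintro ⟨φ, -, rfl⟩ i
    by_cases h : φ i <;> simp [vertex, h]
  · intro hp
    refine ⟨fun i => decide (p i = C.hi i), fun i hi => ?_, funext fun i => ?_⟩
    · have : C.lo i = C.hi i := (C.lo_le_hi i).eq_of_not_lt hi
      rcases hp i with h | h <;> simp [h, this]
    · by_cases h : p i = C.hi i
      · simp [vertex, h]
      · simp [vertex, (hp i).resolve_right h]

theorem mem_upperFacet_vertexSet_iff {C : Cuboid n} {i : Fin n} {p : Fin n → ℝ} :
    p ∈ (C.upperFacet i).vertexSet ↔ p ∈ C.vertexSet ∧ p i = C.hi i := by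
  simp only [mem_vertexSet_iff, upperFacet]
  constructor
  · intro h
    refine ⟨fun j => ?_, by simpa using h i⟩
    rcases eq_or_ne j i with rfl | hj
    · exact Or.inr (by simpa using h j)
    · simpa [hj] using h j
  · rintro ⟨h, hi⟩ j
    rcases eq_or_ne j i with rfl | hj
    · simp [hi]
    · simpa [hj] using h j

theorem mem_lowerFacet_vertexSet_iff {C : Cuboid n} {i : Fin n} {p : Fin n → ℝ} :
    p ∈ (C.lowerFacet i).vertexSet ↔ p ∈ C.vertexSet ∧ p i = C.lo i := by
  simp only [mem_vertexSet_iff, lowerFacet]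
  constructor
  · intro h
    refine ⟨fun j => ?_, by simpa using h i⟩
    rcases eq_or_ne j i with rfl | hj
    · exact Or.inl (by simpa using h j)
    · simpa [hj] using h j
  · rintro ⟨h, hi⟩ j
    rcases eq_or_ne j i with rfl | hj
    · simp [hi]
    · simpa [hj] using h j

theorem lo_le_of_mem_vertexSet {C : Cuboid n} {p : Fin n → ℝ} (hp : p ∈ C.vertexSet)
    (i : Fin n) : C.lo i ≤ p i := by
  rcases mem_vertexSet_iff.1 hp i with h | h <;> simp [h, C.lo_le_hi i]

theorem le_hi_of_mem_vertexSet {C : Cuboid n} {p : Fin n → ℝ} (hp : p ∈ C.vertexSet)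
    (i : Fin n) : p i ≤ C.hi i := by
  rcases mem_vertexSet_iff.1 hp i with h | h <;> simp [h, C.lo_le_hi i]

theorem eq_hi_of_not_isDim {C : Cuboid n} {i : Fin n} (hi : ¬C.IsDim i) {p : Fin n → ℝ}
    (hp : p ∈ C.vertexSet) : p i = C.hi i :=
  (mem_vertexSet_iff.1 hp i).elim (fun h => h.trans ((C.lo_le_hi i).eq_of_not_lt hi)) id

theorem lo_le_lo_of_vertexSet_subset {C D : Cuboid n} (h : D.vertexSet ⊆ C.vertexSet)
    (i : Fin n) : C.lo i ≤ D.lo i := by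
  have hv : Function.update D.hi i (D.lo i) ∈ D.vertexSet := by
    refine mem_vertexSet_iff.2 fun j => ?_
    rcases eq_or_ne j i with rfl | hj <;> simp_all
  simpa using lo_le_of_mem_vertexSet (h hv) i

theorem hi_le_hi_of_vertexSet_subset {C D : Cuboid n} (h : D.vertexSet ⊆ C.vertexSet)
    (i : Fin n) : D.hi i ≤ C.hi i :=
  le_hi_of_mem_vertexSet (h (mem_vertexSet_iff.2 fun _ => Or.inr rfl)) i

theorem vertexSet_subset_upperFacet_of_not_isDim {C D : Cuboid n} {i : Fin n}
    (hsub : D.vertexSet ⊆ C.vertexSet) (hDi : ¬D.IsDim i) {p : Fin n → ℝ}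
    (hp : p ∈ D.vertexSet) (hpi : p ∈ (C.upperFacet i).vertexSet) :
    D.vertexSet ⊆ (C.upperFacet i).vertexSet := fun q hq =>
  mem_upperFacet_vertexSet_iff.2 ⟨hsub hq, by
    rw [eq_hi_of_not_isDim hDi hq, ← eq_hi_of_not_isDim hDi hp,
      (mem_upperFacet_vertexSet_iff.1 hpi).2]⟩

theorem vertexSet_subset_lowerFacet_of_not_isDim {C D : Cuboid n} {i : Fin n}
    (hsub : D.vertexSet ⊆ C.vertexSet) (hDi : ¬D.IsDim i) {p : Fin n → ℝ}
    (hp : p ∈ D.vertexSet) (hpi : p ∈ (C.lowerFacet i).vertexSet) :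
    D.vertexSet ⊆ (C.lowerFacet i).vertexSet := fun q hq =>
  mem_lowerFacet_vertexSet_iff.2 ⟨hsub hq, by
    rw [eq_hi_of_not_isDim hDi hq, ← eq_hi_of_not_isDim hDi hp,
      (mem_lowerFacet_vertexSet_iff.1 hpi).2]⟩

end Cuboid

open Cuboid in
/-- Let `F` be a collection of facets of a cuboid `C` such that for each
`i ∈ Dim(C)` at least one of `∂ᵢ(C)`, `∂'ᵢ(C)` does not belong to `F`. Then every
sub-cuboid `D` of `C` contained in `⋃ F` is contained in a single facet of `F`. -/
theorem subcuboid_in_facet_union_mem_facet {n : ℕ} (C : Cuboid n) (F : Set (Cuboid n))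
    (hfacets : ∀ X ∈ F, ∃ i, C.IsDim i ∧ (X = C.upperFacet i ∨ X = C.lowerFacet i))
    (hnotboth : ∀ i, C.IsDim i → C.upperFacet i ∉ F ∨ C.lowerFacet i ∉ F)
    (D : Cuboid n) (hsub : D.vertexSet ⊆ C.vertexSet)
    (hcov : D.vertexSet ⊆ ⋃ X ∈ F, X.vertexSet) :
    ∃ X ∈ F, D.vertexSet ⊆ X.vertexSet := by
  classical
  set p : Fin n → ℝ := fun i => if D.IsDim i ∧ C.upperFacet i ∈ F then D.lo i else D.hi i
  have hp : p ∈ D.vertexSet := mem_vertexSet_iff.2 fun i => by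
    by_cases h : D.IsDim i ∧ C.upperFacet i ∈ F <;> simp [p, h]
  obtain ⟨X, hXF, hpX⟩ : ∃ X ∈ F, p ∈ X.vertexSet := by simpa using hcov hp
  refine ⟨X, hXF, ?_⟩
  obtain ⟨i, hCi, rfl | rfl⟩ := hfacets X hXF
  · have hDi : ¬D.IsDim i := fun hDi => by
      have hpi : p i = D.lo i := if_pos ⟨hDi, hXF⟩
      have hpC : p i = C.hi i := (mem_upperFacet_vertexSet_iff.1 hpX).2
      have hlt : D.lo i < D.hi i := hDi
      linarith [hi_le_hi_of_vertexSet_subset hsub i]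
    exact vertexSet_subset_upperFacet_of_not_isDim hsub hDi hp hpX
  · have hDi : ¬D.IsDim i := fun hDi => by
      have hpi : p i = D.hi i :=
        if_neg fun h => ((hnotboth i hCi).resolve_right (not_not.2 hXF)) h.2
      have hpC : p i = C.lo i := (mem_lowerFacet_vertexSet_iff.1 hpX).2
      have hlt : D.lo i < D.hi i := hDi
      linarith [lo_le_lo_of_vertexSet_subset hsub i]
    exact vertexSet_subset_lowerFacet_of_not_isDim hsub hDi hp hpX
end

section
/- Let x and y be n-dimensional observables on a monotone σ-complete effect algebra E such that x((−∞,t₁)×···×(−∞,tₙ)) = y((−∞,t₁)×···×(−∞,tₙ)) for all t₁,...,tₙ ∈ ℝ. Then x = y on all of Borel(ℝⁿ). -/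
/-!
The sets on which `x` and `y` agree form a Dynkin system: it contains `∅` because an observable
sends `∅` to `0`, it is closed under complements because `x Sᶜ` is the unique orthosupplement
of `x S`, and it is closed under countable disjoint unions because `x (⋃ i, f i)` is the
supremum of the finite sums `x (f 0) + ⋯ + x (f k)`, and suprema are unique since the order of
an effect algebra is antisymmetric. The rays `{p | ∀ i, p i < t i}` form a π-system generating
the Borel σ-algebra of `ℝⁿ`, so the π–λ theorem gives `x = y` on all Borel sets.
-/

/-- An effect algebra `(E; +, 0, 1)`: a partial commutative associative operation
(`Defined a b` means `a + b` is defined) such that every element has a unique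
orthosupplement and `a + 1` defined implies `a = 0`. -/
structure EffectAlg (E : Type*) where
  Defined : E → E → Prop
  add : E → E → E
  zero : E
  one : E
  defined_comm : ∀ a b, Defined a b → Defined b a
  add_comm : ∀ a b, Defined a b → add a b = add b a
  defined_assoc_right : ∀ a b c, Defined a b → Defined (add a b) c → Defined b c
  defined_assoc_left : ∀ a b c, Defined a b → Defined (add a b) c → Defined a (add b c)
  add_assoc : ∀ a b c, Defined a b → Defined (add a b) c →
    add (add a b) c = add a (add b c)
  orthosupplement : ∀ a, ∃! a', Defined a a' ∧ add a a' = one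
  add_one : ∀ a, Defined a one → a = zero

namespace EffectAlg

variable {E : Type*} (A : EffectAlg E)

/-- The induced partial order: `a ≤ b` iff `b = a + c` for some `c`. -/
def le (a b : E) : Prop := ∃ c, A.Defined a c ∧ A.add a c = b

/-- `m` is the least upper bound of the set `S` in the induced order. -/
def isLUB (S : Set E) (m : E) : Prop :=
  (∀ x ∈ S, A.le x m) ∧ ∀ b, (∀ x ∈ S, A.le x b) → A.le m b

end EffectAlg

/-- An `n`-dimensional observable on an effect algebra: `x(ℝⁿ) = 1`, `x` is additive
on disjoint Borel sets, and continuous on increasing sequences of Borel sets. -/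
def IsObservable {n : ℕ} {E : Type*} (A : EffectAlg E)
    (x : Set (Fin n → ℝ) → E) : Prop :=
  x Set.univ = A.one ∧
  (∀ S T : Set (Fin n → ℝ), MeasurableSet S → MeasurableSet T → Disjoint S T →
    A.Defined (x S) (x T) ∧ x (S ∪ T) = A.add (x S) (x T)) ∧
  (∀ S : ℕ → Set (Fin n → ℝ), (∀ k, MeasurableSet (S k)) → Monotone S →
    A.isLUB (Set.range fun k => x (S k)) (x (⋃ k, S k)))

namespace EffectAlg

variable {E : Type*} (A : EffectAlg E)

theorem add_left_cancel {a b c : E} (hab : A.Defined a b) (hac : A.Defined a c)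
    (h : A.add a b = A.add a c) : b = c := by
  -- `b` and `c` are both orthosupplements of `a + d`, where `d` is that of `a + b = a + c`.
  obtain ⟨d, ⟨hd, hd1⟩, -⟩ := A.orthosupplement (A.add a b)
  have hba := A.defined_comm _ _ hab
  have hca := A.defined_comm _ _ hac
  have hbad : A.Defined (A.add b a) d := by rwa [A.add_comm b a hba]
  have hcad : A.Defined (A.add c a) d := by rwa [A.add_comm c a hca, ← h]
  have hb : A.Defined (A.add a d) b ∧ A.add (A.add a d) b = A.one := by
    have hdef := A.defined_assoc_left b a d hba hbad
    refine ⟨A.defined_comm _ _ hdef, ?_⟩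
    rw [← A.add_comm _ _ hdef, ← A.add_assoc b a d hba hbad, A.add_comm b a hba, hd1]
  have hc : A.Defined (A.add a d) c ∧ A.add (A.add a d) c = A.one := by
    have hdef := A.defined_assoc_left c a d hca hcad
    refine ⟨A.defined_comm _ _ hdef, ?_⟩
    rw [← A.add_comm _ _ hdef, ← A.add_assoc c a d hca hcad, A.add_comm c a hca, ← h, hd1]
  exact (A.orthosupplement (A.add a d)).unique hb hc

theorem one_add_zero : A.Defined A.one A.zero ∧ A.add A.one A.zero = A.one := by
  obtain ⟨u, hu, -⟩ := A.orthosupplement A.one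
  rwa [← A.add_one u (A.defined_comm _ _ hu.1)]

theorem add_zero_of_add_eq_one {a b : E} (hab : A.Defined a b) (h1 : A.add a b = A.one) :
    A.Defined b A.zero ∧ A.add b A.zero = b := by
  have hD : A.Defined (A.add a b) A.zero := by rw [h1]; exact A.one_add_zero.1
  have hb0 : A.add a (A.add b A.zero) = A.one := by
    rw [← A.add_assoc a b A.zero hab hD, h1, A.one_add_zero.2]
  exact ⟨A.defined_assoc_right a b A.zero hab hD,
    (A.orthosupplement a).unique ⟨A.defined_assoc_left a b A.zero hab hD, hb0⟩ ⟨hab, h1⟩⟩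

theorem add_zero (b : E) : A.Defined b A.zero ∧ A.add b A.zero = b := by
  obtain ⟨b', ⟨hb, hb1⟩, -⟩ := A.orthosupplement b
  have hb' := A.defined_comm _ _ hb
  exact A.add_zero_of_add_eq_one hb' (by rw [A.add_comm b' b hb', hb1])

theorem le_antisymm {a b : E} (hab : A.le a b) (hba : A.le b a) : a = b := by
  obtain ⟨c, hc, rfl⟩ := hab
  obtain ⟨d, hd, hd1⟩ := hba
  have hcd0 : A.add c d = A.zero := by
    refine A.add_left_cancel (A.defined_assoc_left a c d hc hd) (A.add_zero a).1 ?_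
    rw [← A.add_assoc a c d hc hd, hd1, (A.add_zero a).2]
  have hd0 : d = A.zero := by
    refine A.add_one d (A.defined_assoc_right c d A.one (A.defined_assoc_right a c d hc hd) ?_)
    rw [hcd0]; exact A.defined_comm _ _ A.one_add_zero.1
  have hc0 : c = A.zero := by simpa only [hd0, (A.add_zero c).2] using hcd0
  rw [hc0, (A.add_zero a).2]

theorem isLUB_unique {S : Set E} {m m' : E} (h : A.isLUB S m) (h' : A.isLUB S m') : m = m' :=
  A.le_antisymm (h.2 m' h'.1) (h'.2 m h.1)

end EffectAlg

namespace IsObservable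

open Function

variable {n : ℕ} {E : Type*} {A : EffectAlg E} {x y : Set (Fin n → ℝ) → E}

theorem apply_empty (hx : IsObservable A x) : x ∅ = A.zero := by
  have h := (hx.2.1 ∅ Set.univ .empty .univ (Set.empty_disjoint _)).1
  rw [hx.1] at h
  exact A.add_one _ h

theorem apply_add_apply_compl (hx : IsObservable A x) {S : Set (Fin n → ℝ)}
    (hS : MeasurableSet S) : A.Defined (x S) (x Sᶜ) ∧ A.add (x S) (x Sᶜ) = A.one := by
  obtain ⟨hdef, hadd⟩ := hx.2.1 S Sᶜ hS hS.compl disjoint_compl_right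
  rw [← hadd, Set.union_compl_self, hx.1]
  exact ⟨hdef, rfl⟩

theorem apply_compl_eq (hx : IsObservable A x) (hy : IsObservable A y) {S : Set (Fin n → ℝ)}
    (hS : MeasurableSet S) (h : x S = y S) : x Sᶜ = y Sᶜ :=
  (A.orthosupplement (x S)).unique (hx.apply_add_apply_compl hS)
    (h ▸ hy.apply_add_apply_compl hS)

theorem apply_accumulate_eq (hx : IsObservable A x) (hy : IsObservable A y)
    {f : ℕ → Set (Fin n → ℝ)} (hdisj : Pairwise (Disjoint on f))
    (hmeas : ∀ i, MeasurableSet (f i)) (hagree : ∀ i, x (f i) = y (f i)) (k : ℕ) :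
    x (Set.accumulate f k) = y (Set.accumulate f k) := by
  induction k with
  | zero => simpa only [Set.accumulate_zero_nat] using hagree 0
  | succ k ih =>
    have hacc : MeasurableSet (Set.accumulate f k) :=
      .iUnion fun i => .iUnion fun _ => hmeas i
    have hdisj' := Set.disjoint_accumulate hdisj k.lt_succ_self
    rw [Set.accumulate_succ, (hx.2.1 _ _ hacc (hmeas _) hdisj').2,
      (hy.2.1 _ _ hacc (hmeas _) hdisj').2, ih, hagree]

theorem apply_iUnion_eq (hx : IsObservable A x) (hy : IsObservable A y)
    {f : ℕ → Set (Fin n → ℝ)} (hdisj : Pairwise (Disjoint on f))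
    (hmeas : ∀ i, MeasurableSet (f i)) (hagree : ∀ i, x (f i) = y (f i)) :
    x (⋃ i, f i) = y (⋃ i, f i) := by
  have hacc : ∀ k, MeasurableSet (Set.accumulate f k) :=
    fun k => .iUnion fun i => .iUnion fun _ => hmeas i
  have hxl := hx.2.2 _ hacc Set.monotone_accumulate
  have hyl := hy.2.2 _ hacc Set.monotone_accumulate
  rw [Set.iUnion_accumulate] at hxl hyl
  rw [funext (hx.apply_accumulate_eq hy hdisj hmeas hagree)] at hxl
  exact A.isLUB_unique hxl hyl

end IsObservable

theorem isPiSystem_univ_pi_Iio {ι : Type*} :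
    IsPiSystem (Set.pi Set.univ '' Set.pi Set.univ fun _ : ι => Set.range (Set.Iio : ℝ → Set ℝ)) :=
  IsPiSystem.pi fun _ => isPiSystem_Iio

theorem measurableSpace_pi_eq_generateFrom_univ_pi_Iio {ι : Type*} [Finite ι] :
    (MeasurableSpace.pi : MeasurableSpace (ι → ℝ)) = MeasurableSpace.generateFrom
      (Set.pi Set.univ '' Set.pi Set.univ fun _ => Set.range (Set.Iio : ℝ → Set ℝ)) := by
  refine (generateFrom_eq_pi (fun _ => ?_) (fun _ => ?_)).symm
  · exact (borel_eq_generateFrom_Iio ℝ).symm.trans BorelSpace.measurable_eq.symm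
  · exact ⟨fun k => Set.Iio (k : ℝ), fun k => ⟨k, rfl⟩,
      Set.iUnion_eq_univ_iff.2 fun p => exists_nat_gt p⟩

theorem observable_unique_of_eq_on_rays_general {n : ℕ} {E : Type*} (A : EffectAlg E)
    (x y : Set (Fin n → ℝ) → E)
    (hx : IsObservable A x) (hy : IsObservable A y)
    (hray : ∀ t : Fin n → ℝ, x {p | ∀ i, p i < t i} = y {p | ∀ i, p i < t i}) :
    ∀ S : Set (Fin n → ℝ), MeasurableSet S → x S = y S := by
  refine MeasurableSpace.induction_on_inter measurableSpace_pi_eq_generateFrom_univ_pi_Iio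
    isPiSystem_univ_pi_Iio (by rw [hx.apply_empty, hy.apply_empty]) ?_
    (fun _ hS => hx.apply_compl_eq hy hS) (fun _ hdisj hmeas => hx.apply_iUnion_eq hy hdisj hmeas)
  rintro _ ⟨I, hI, rfl⟩
  choose t ht using fun i => hI i (Set.mem_univ i)
  convert hray t using 2 <;> ext p <;> simp [← ht]

/-- Two `n`-dimensional observables on a monotone σ-complete effect algebra which
agree on all products of rays `(−∞,t₁)×⋯×(−∞,tₙ)` agree on every Borel set. -/
theorem observable_unique_of_eq_on_rays {n : ℕ} {E : Type*} (A : EffectAlg E)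
    (hσ : ∀ f : ℕ → E, (∀ k, A.le (f k) (f (k + 1))) → ∃ s, A.isLUB (Set.range f) s)
    (x y : Set (Fin n → ℝ) → E)
    (hx : IsObservable A x) (hy : IsObservable A y)
    (hray : ∀ t : Fin n → ℝ, x {p | ∀ i, p i < t i} = y {p | ∀ i, p i < t i}) :
    ∀ S : Set (Fin n → ℝ), MeasurableSet S → x S = y S :=
  observable_unique_of_eq_on_rays_general A x y hx hy hray
end

section
/- Let T be an effect-tribe of fuzzy sets on a nonempty set Ω, and let F : ℝⁿ → T be an n-dimensional spectral resolution (monotone, pointwise suprema/infima limits as in the definition, with the volume condition). Then there exists a unique n-dimensional observable x : Borel(ℝⁿ) → T with x((−∞,s₁)×···×(−∞,sₙ)) = F(s₁,...,sₙ) for all s₁,...,sₙ ∈ ℝ. -/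
/-- An effect-tribe on `Ω`: a family of fuzzy sets containing `1`, closed under
`f ↦ 1 − f`, closed under sums `f + g` when `f ≤ 1 − g`, and closed under pointwise
suprema of increasing sequences. -/
def IsEffectTribe {Ω : Type*} (T : Set (Ω → ℝ)) : Prop :=
  (∀ f ∈ T, ∀ ω, f ω ∈ Set.Icc (0 : ℝ) 1) ∧
  ((fun _ => (1 : ℝ)) ∈ T) ∧
  (∀ f ∈ T, (fun ω => 1 - f ω) ∈ T) ∧
  (∀ f ∈ T, ∀ g ∈ T, (∀ ω, f ω ≤ 1 - g ω) → (fun ω => f ω + g ω) ∈ T) ∧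
  (∀ f : ℕ → Ω → ℝ, (∀ k, f k ∈ T) → (∀ k ω, f k ω ≤ f (k + 1) ω) →
    (fun ω => ⨆ k, f k ω) ∈ T)

/-- An `n`-dimensional spectral resolution with values in an effect-tribe `T`:
monotone, with pointwise supremum `1`, left-continuous, pointwise infimum `0` in
each coordinate, and satisfying the (pointwise) volume condition. -/
def IsTribeSpectralResolution {n : ℕ} {Ω : Type*} (T : Set (Ω → ℝ))
    (F : (Fin n → ℝ) → Ω → ℝ) : Prop :=
  (∀ s, F s ∈ T) ∧
  (∀ s t : Fin n → ℝ, (∀ i, s i ≤ t i) → ∀ ω, F s ω ≤ F t ω) ∧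
  (∀ ω, (⨆ s : Fin n → ℝ, F s ω) = 1) ∧
  (∀ (t : Fin n → ℝ) (ω : Ω),
    (⨆ s : {s : Fin n → ℝ // ∀ i, s i < t i}, F s.1 ω) = F t ω) ∧
  (∀ (i : Fin n) (t : Fin n → ℝ) (ω : Ω),
    (⨅ r : ℝ, F (Function.update t i r) ω) = 0) ∧
  (∀ a b : Fin n → ℝ, (∀ i, a i ≤ b i) → ∀ ω,
    0 ≤ ∑ φ : Fin n → Bool,
      (-1 : ℝ) ^ (Finset.univ.filter fun i => φ i = false).card *
        F (fun i => if φ i then b i else a i) ω)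

/-- An `n`-dimensional observable with values in an effect-tribe `T`, defined on the
Borel σ-algebra of `ℝⁿ`. -/
def IsTribeObservable {n : ℕ} {Ω : Type*} (T : Set (Ω → ℝ))
    (x : {S : Set (Fin n → ℝ) // MeasurableSet S} → Ω → ℝ) : Prop :=
  (∀ S, x S ∈ T) ∧
  (x ⟨Set.univ, MeasurableSet.univ⟩ = fun _ => (1 : ℝ)) ∧
  (∀ S₁ S₂ : {S : Set (Fin n → ℝ) // MeasurableSet S}, Disjoint S₁.1 S₂.1 →
    ∀ ω, x ⟨S₁.1 ∪ S₂.1, S₁.2.union S₂.2⟩ ω = x S₁ ω + x S₂ ω) ∧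
  (∀ S : ℕ → {S : Set (Fin n → ℝ) // MeasurableSet S},
    Monotone (fun k => (S k).1) →
    ∀ ω, (⨆ k, x (S k) ω) =
      x ⟨⋃ k, (S k).1, MeasurableSet.iUnion fun k => (S k).2⟩ ω)

theorem ray_measurableSet {n : ℕ} (s : Fin n → ℝ) :
    MeasurableSet {p : Fin n → ℝ | ∀ i, p i < s i} := by
  have h : {p : Fin n → ℝ | ∀ i, p i < s i} = ⋂ i, {p : Fin n → ℝ | p i < s i} := by
    ext p; simp
  rw [h]
  exact MeasurableSet.iInter fun i =>
    measurableSet_lt (measurable_pi_apply i) measurable_const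

/-!
For each `ω`, `s ↦ F s ω` is an `n`-dimensional distribution function. Its box increments
`Δ_a^b` (the alternating sums of the volume condition) are additive under cutting a box by a
hyperplane, hence finitely subadditive, and by left continuity and compactness even countably
subadditive. Covering by half-open boxes `[a, b)` therefore gives an outer measure which assigns
`Δ_a^b` to `[a, b)` and for which half-spaces are Carathéodory measurable: the Lebesgue–Stieltjes
measure `P_ω`. Letting the lower corner tend to `-∞` gives `P_ω {p | p < s} = F s ω`.

Put `x A ω = P_ω A`. The sets `A` with `x A ∈ T` form a Dynkin system containing the π-system of
rays, hence all Borel sets. Conversely, at each `ω` an observable is a probability measure, so it is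
determined by its values on rays.
-/

namespace MultiCDF

open Set Filter Function MeasureTheory Topology BoxIntegral
open scoped ENNReal NNReal

variable {n : ℕ}

def corner (a b : Fin n → ℝ) (φ : Fin n → Bool) : Fin n → ℝ := fun i => if φ i then b i else a i

def cornerSign (φ : Fin n → Bool) : ℝ :=
  (-1 : ℝ) ^ (Finset.univ.filter fun i => φ i = false).card

/-- `Δ_a^b f`: the mass that a distribution function `f` assigns to the half-open box `[a, b)`. -/
def vol (f : (Fin n → ℝ) → ℝ) (a b : Fin n → ℝ) : ℝ :=
  ∑ φ : Fin n → Bool, cornerSign φ * f (corner a b φ)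

lemma cornerSign_eq_prod (φ : Fin n → Bool) :
    cornerSign φ = ∏ i, if φ i then (1 : ℝ) else -1 := by
  rw [Finset.prod_ite, Finset.prod_const_one, one_mul, Finset.prod_const, cornerSign]
  simp

lemma cornerSign_update_not (φ : Fin n → Bool) (i : Fin n) :
    cornerSign (update φ i (!φ i)) = -cornerSign φ := by
  simp only [cornerSign_eq_prod, ← Finset.mul_prod_erase _ _ (Finset.mem_univ i), update_self]
  rw [Finset.prod_congr rfl fun j hj => by rw [update_of_ne (Finset.ne_of_mem_erase hj)]]
  cases φ i <;> simp

lemma update_corner_update_not (a b : Fin n → ℝ) (φ : Fin n → Bool) (i : Fin n) (t : ℝ) :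
    update (corner a b (update φ i (!φ i))) i t = update (corner a b φ) i t := by
  ext j
  rcases eq_or_ne j i with rfl | hj <;> simp [corner, *]

/-- The vertices lying on the hyperplane `{p i = t}` cancel in pairs. -/
lemma sum_cornerSign_mul_update_corner (f : (Fin n → ℝ) → ℝ) (a b : Fin n → ℝ) (i : Fin n)
    (t : ℝ) : ∑ φ : Fin n → Bool, cornerSign φ * f (update (corner a b φ) i t) = 0 := by
  have hflip : Involutive fun φ : Fin n → Bool => update φ i (!φ i) := fun φ => by
    ext j; rcases eq_or_ne j i with rfl | hj <;> simp [*]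
  have h := Equiv.sum_comp hflip.toPerm fun φ => cornerSign φ * f (update (corner a b φ) i t)
  simp only [Involutive.coe_toPerm, cornerSign_update_not, update_corner_update_not,
    neg_mul, Finset.sum_neg_distrib] at h
  linarith

lemma corner_update_upper (a b : Fin n → ℝ) (φ : Fin n → Bool) (i : Fin n) (t : ℝ) :
    corner a (update b i t) φ = if φ i then update (corner a b φ) i t else corner a b φ := by
  cases h : φ i <;> ext j <;> rcases eq_or_ne j i with rfl | hj <;> simp [corner, *]

lemma corner_update_lower (a b : Fin n → ℝ) (φ : Fin n → Bool) (i : Fin n) (t : ℝ) :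
    corner (update a i t) b φ = if φ i then corner a b φ else update (corner a b φ) i t := by
  cases h : φ i <;> ext j <;> rcases eq_or_ne j i with rfl | hj <;> simp [corner, *]

lemma vol_split (f : (Fin n → ℝ) → ℝ) (a b : Fin n → ℝ) (i : Fin n) (t : ℝ) :
    vol f a b = vol f a (update b i t) + vol f (update a i t) b := by
  have h := sum_cornerSign_mul_update_corner f a b i t
  simp only [vol, ← Finset.sum_add_distrib, corner_update_upper, corner_update_lower]
  rw [eq_comm, ← sub_eq_zero, ← Finset.sum_sub_distrib, ← h]
  refine Finset.sum_congr rfl fun φ _ => ?_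
  cases φ i <;> simp only [Bool.false_eq_true, if_true, if_false] <;> ring

lemma vol_eq_zero_of_eq (f : (Fin n → ℝ) → ℝ) {a b : Fin n → ℝ} {i : Fin n} (h : a i = b i) :
    vol f a b = 0 := by
  have := vol_split f a b i (b i)
  rwa [update_eq_self, ← h, update_eq_self, right_eq_add] at this

/-- An `n`-dimensional distribution function: `f s` is meant to be the mass of
`{p | ∀ i, p i < s i}`. -/
structure IsCDF (f : (Fin n → ℝ) → ℝ) : Prop where
  nonneg : ∀ s, 0 ≤ f s
  le_one : ∀ s, f s ≤ 1
  mono : Monotone f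
  iSup_eq_one : (⨆ s, f s) = 1
  iSup_lt_eq : ∀ t, (⨆ s : {s : Fin n → ℝ // ∀ i, s i < t i}, f s.1) = f t
  iInf_update_eq_zero : ∀ i t, (⨅ r : ℝ, f (update t i r)) = 0
  vol_nonneg : ∀ a b, a ≤ b → 0 ≤ vol f a b

lemma tendsto_corner {ι : Type*} {l : Filter ι} {A B : ι → Fin n → ℝ} {a b : Fin n → ℝ}
    (hA : Tendsto A l (𝓝 a)) (hB : Tendsto B l (𝓝 b)) (φ : Fin n → Bool) :
    Tendsto (fun k => corner (A k) (B k) φ) l (𝓝 (corner a b φ)) := by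
  refine tendsto_pi_nhds.2 fun i => ?_
  cases h : φ i
  · simpa [corner, h] using tendsto_pi_nhds.1 hA i
  · simpa [corner, h] using tendsto_pi_nhds.1 hB i

lemma corner_mono {a a' b b' : Fin n → ℝ} (ha : a ≤ a') (hb : b ≤ b') (φ : Fin n → Bool) :
    corner a b φ ≤ corner a' b' φ := fun i => by
  cases h : φ i <;> simp [corner, h, ha i, hb i]

lemma exists_seq_tendsto_of_lt {a b : Fin n → ℝ} (hab : ∀ i, a i < b i) :
    ∃ c : ℕ → Fin n → ℝ, (∀ k i, a i < c k i ∧ c k i < b i) ∧ Tendsto c atTop (𝓝 b) := by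
  choose u _ hu_mem hu_lim using fun i => exists_seq_strictMono_tendsto' (hab i)
  exact ⟨fun k i => u i k, fun k i => hu_mem i k, tendsto_pi_nhds.2 hu_lim⟩

namespace IsCDF

variable {f : (Fin n → ℝ) → ℝ} (hf : IsCDF f)
include hf

lemma tendsto_of_le_of_tendsto {ι : Type*} {l : Filter ι} {c : ι → Fin n → ℝ} {b : Fin n → ℝ}
    (hcb : ∀ k, c k ≤ b) (hc : Tendsto c l (𝓝 b)) : Tendsto (fun k => f (c k)) l (𝓝 (f b)) := by
  refine tendsto_order.2 ⟨fun y hy => ?_, fun y hy => Eventually.of_forall fun k =>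
    (hf.mono (hcb k)).trans_lt hy⟩
  have : Nonempty {s : Fin n → ℝ // ∀ i, s i < b i} := ⟨⟨fun i => b i - 1, fun i => sub_one_lt _⟩⟩
  rw [← hf.iSup_lt_eq b] at hy
  obtain ⟨⟨s, hsb⟩, hys⟩ := exists_lt_of_lt_ciSup hy
  have hsc : ∀ᶠ k in l, s ≤ c k := by
    simpa only [Pi.le_def, eventually_all] using fun i =>
      (tendsto_pi_nhds.1 hc i).eventually (eventually_ge_nhds (hsb i))
  exact hsc.mono fun k hk => hys.trans_le (hf.mono hk)

lemma tendsto_vol {ι : Type*} {l : Filter ι} {A B : ι → Fin n → ℝ} {a b : Fin n → ℝ}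
    (hAa : ∀ k, A k ≤ a) (hBb : ∀ k, B k ≤ b) (hA : Tendsto A l (𝓝 a))
    (hB : Tendsto B l (𝓝 b)) : Tendsto (fun k => vol f (A k) (B k)) l (𝓝 (vol f a b)) :=
  tendsto_finsetSum _ fun φ _ => (hf.tendsto_of_le_of_tendsto
    (fun k => corner_mono (hAa k) (hBb k) φ) (tendsto_corner hA hB φ)).const_mul _

lemma tendsto_update_atBot (i : Fin n) (t : Fin n → ℝ) :
    Tendsto (fun r : ℝ => f (update t i r)) atBot (𝓝 0) := by
  rw [← hf.iInf_update_eq_zero i t]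
  exact tendsto_atBot_ciInf (fun r r' h => hf.mono (update_mono h))
    ⟨0, by rintro _ ⟨r, rfl⟩; exact hf.nonneg _⟩

/-- As the lower corner recedes to `-∞`, only the vertex `b` survives in `vol f a b`. -/
lemma tendsto_vol_atBot {ι : Type*} {l : Filter ι} {A : ι → Fin n → ℝ} (b : Fin n → ℝ)
    (hA : ∀ i, Tendsto (fun k => A k i) l atBot) :
    Tendsto (fun k => vol f (A k) b) l (𝓝 (f b)) := by
  have hterm : ∀ φ : Fin n → Bool, Tendsto (fun k => cornerSign φ * f (corner (A k) b φ)) l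
      (𝓝 (if φ = fun _ => true then f b else 0)) := by
    intro φ
    split_ifs with hφ
    · subst hφ
      have hcorner : ∀ k, corner (A k) b (fun _ => true) = b := fun k => rfl
      simpa [hcorner, cornerSign] using tendsto_const_nhds
    obtain ⟨i, hi⟩ : ∃ i, φ i = false := by
      by_contra! h
      exact hφ (funext fun i => by simpa using h i)
    have hle : ∀ᶠ k in l, f (corner (A k) b φ) ≤ f (update b i (A k i)) := by
      filter_upwards [eventually_all.2 fun j => (hA j).eventually_le_atBot (b j)] with k hk
      refine hf.mono fun j => ?_
      rcases eq_or_ne j i with rfl | hj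
      · simp [corner, hi]
      · cases h : φ j <;> simp [corner, h, hj, hk j]
    simpa using (squeeze_zero' (Eventually.of_forall fun k => hf.nonneg _) hle
      ((hf.tendsto_update_atBot i b).comp (hA i))).const_mul (cornerSign φ)
  simpa [vol] using tendsto_finsetSum Finset.univ fun φ _ => hterm φ

lemma exists_lt_and_vol_sub_le {a b : Fin n → ℝ} (hab : ∀ i, a i < b i) {ε : ℝ} (hε : 0 < ε) :
    ∃ b' : Fin n → ℝ, (∀ i, a i < b' i ∧ b' i < b i) ∧ vol f a b - ε ≤ vol f a b' := by
  obtain ⟨c, hc, hcb⟩ := exists_seq_tendsto_of_lt hab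
  have := hf.tendsto_vol (A := fun _ => a) (fun _ => le_rfl) (fun k i => (hc k i).2.le)
    tendsto_const_nhds hcb
  obtain ⟨k, hk⟩ := (this.eventually (eventually_ge_nhds (sub_lt_self _ hε))).exists
  exact ⟨c k, hc k, hk⟩

lemma exists_lt_and_vol_le_add (a b : Fin n → ℝ) {ε : ℝ} (hε : 0 < ε) :
    ∃ a' : Fin n → ℝ, (∀ i, a' i < a i) ∧ vol f a' b ≤ vol f a b + ε := by
  obtain ⟨c, hc, hca⟩ := exists_seq_tendsto_of_lt fun i => sub_one_lt (a i)
  have := hf.tendsto_vol (B := fun _ => b) (fun k i => (hc k i).2.le) (fun _ => le_rfl) hca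
    tendsto_const_nhds
  obtain ⟨k, hk⟩ := (this.eventually (eventually_le_nhds (lt_add_of_pos_right _ hε))).exists
  exact ⟨c k, fun i => (hc k i).2, hk⟩

end IsCDF

/-- `vol f` on `BoxIntegral` boxes, which are half-open on the other side: `vol` does not see the
difference. -/
def boxAdditive (f : (Fin n → ℝ) → ℝ) : BoxAdditiveMap (Fin n) ℝ ⊤ :=
  BoxAdditiveMap.ofMapSplitAdd (fun I => vol f I.lower I.upper) ⊤ fun I _ i x hx => by
    classical
    rw [Box.splitLower_def hx, Box.splitUpper_def hx]
    exact (vol_split f I.lower I.upper i x).symm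

@[simp]
lemma boxAdditive_apply (f : (Fin n → ℝ) → ℝ) (I : Box (Fin n)) :
    boxAdditive f I = vol f I.lower I.upper := rfl

namespace IsCDF

variable {f : (Fin n → ℝ) → ℝ} (hf : IsCDF f)
include hf

lemma sum_vol_le {J : Box (Fin n)} (π : Prepartition J) :
    ∑ J' ∈ π.boxes, vol f J'.lower J'.upper ≤ vol f J.lower J.upper := by
  classical
  have hπ := π.isPartitionDisjUnionOfEqDiff π.iUnion_compl
  have hsum : ∑ J' ∈ π.boxes ∪ π.compl.boxes, boxAdditive f J' = boxAdditive f J :=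
    (boxAdditive f).sum_partition_boxes le_top hπ
  rw [Prepartition.sum_disj_union_boxes (π.iUnion_compl ▸ disjoint_sdiff_self_right)] at hsum
  simp only [boxAdditive_apply] at hsum
  exact hsum ▸ le_add_of_nonneg_right (Finset.sum_nonneg fun J' _ =>
    hf.vol_nonneg _ _ J'.lower_le_upper)

/-- Refine `I` until each piece either lies in `J k` or misses it; every piece then lies in some
`J k`. -/
lemma vol_le_sum_of_subset_biUnion {ι : Type*} {I : Box (Fin n)} {J : ι → Box (Fin n)}
    {t : Finset ι} (h : (I : Set (Fin n → ℝ)) ⊆ ⋃ k ∈ t, ↑(J k)) :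
    vol f I.lower I.upper ≤ ∑ k ∈ t, vol f (J k).lower (J k).upper := by
  classical
  obtain ⟨s, hs⟩ :=
    (Prepartition.eventually_not_disjoint_imp_le_of_mem_splitMany (t.image J)).exists
  set π := Prepartition.splitMany I s
  have hcov : ∀ J' ∈ π.boxes, ∃ k ∈ t, J' ≤ J k := by
    intro J' hJ'
    obtain ⟨k, hk, hxk⟩ := mem_iUnion₂.1 (h (π.le_of_mem hJ' J'.upper_mem))
    refine ⟨k, hk, hs I (J k) (Finset.mem_image_of_mem J hk) J' hJ' ?_⟩
    exact Box.not_disjoint_coe_iff_nonempty_inter.2 ⟨J'.upper, hxk, J'.upper_mem⟩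
  calc vol f I.lower I.upper = ∑ J' ∈ π.boxes, vol f J'.lower J'.upper :=
        ((boxAdditive f).sum_partition_boxes le_top (Prepartition.isPartition_splitMany I s)).symm
    _ ≤ ∑ J' ∈ π.boxes, ∑ k ∈ t with J' ≤ J k, vol f J'.lower J'.upper := by
        refine Finset.sum_le_sum fun J' hJ' => ?_
        obtain ⟨k, hk, hJ'k⟩ := hcov J' hJ'
        exact Finset.single_le_sum (f := fun _ => vol f J'.lower J'.upper)
          (fun _ _ => hf.vol_nonneg _ _ J'.lower_le_upper) (Finset.mem_filter.2 ⟨hk, hJ'k⟩)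
    _ = ∑ k ∈ t, ∑ J' ∈ π.boxes with J' ≤ J k, vol f J'.lower J'.upper :=
        Finset.sum_comm' fun _ _ => by simp only [Finset.mem_filter]; tauto
    _ ≤ ∑ k ∈ t, vol f (J k).lower (J k).upper := Finset.sum_le_sum fun k _ =>
        hf.sum_vol_le
          { boxes := π.boxes.filter (· ≤ J k)
            le_of_mem' := fun _ hJ' => (Finset.mem_filter.1 hJ').2
            pairwiseDisjoint := π.pairwiseDisjoint.mono <|
              Finset.coe_subset.2 (Finset.filter_subset _ _) }

end IsCDF

def icoBox (a b : Fin n → ℝ) : Set (Fin n → ℝ) := univ.pi fun i => Ico (a i) (b i)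

lemma mem_icoBox {a b p : Fin n → ℝ} : p ∈ icoBox a b ↔ ∀ i, a i ≤ p i ∧ p i < b i := by
  simp [icoBox]

namespace IsCDF

variable {f : (Fin n → ℝ) → ℝ} (hf : IsCDF f)
include hf

/-- Shrinking `[a, b)` to the compact `[a, b']` and enlarging each `[A k, B k)` to an open box
costs little volume by left continuity; compactness then reduces to finite subadditivity. -/
lemma exists_finset_vol_le_sum_add {a b : Fin n → ℝ} (hab : ∀ i, a i < b i)
    {ι : Type*} {A B : ι → Fin n → ℝ} (hAB : ∀ k, A k ≤ B k)
    (h : icoBox a b ⊆ ⋃ k, icoBox (A k) (B k)) {ε : ℝ} (hε : 0 < ε) {δ : ι → ℝ}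
    (hδ : ∀ k, 0 < δ k) : ∃ t : Finset ι, vol f a b ≤ ∑ k ∈ t, (vol f (A k) (B k) + δ k) + ε := by
  obtain ⟨b', hb', hvb'⟩ := hf.exists_lt_and_vol_sub_le hab hε
  choose A' hA' hvA' using fun k => hf.exists_lt_and_vol_le_add (A k) (B k) (hδ k)
  have hAB' : ∀ k i, A' k i < B k i := fun k i => (hA' k i).trans_le (hAB k i)
  have hcov : Icc a b' ⊆ ⋃ k, univ.pi fun i => Ioo (A' k i) (B k i) := by
    intro p hp
    have hpb : p ∈ icoBox a b := mem_icoBox.2 fun i => ⟨hp.1 i, (hp.2 i).trans_lt (hb' i).2⟩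
    obtain ⟨k, hk⟩ := mem_iUnion.1 (h hpb)
    exact mem_iUnion.2 ⟨k, mem_univ_pi.2 fun i =>
      ⟨(hA' k i).trans_le (mem_icoBox.1 hk i).1, (mem_icoBox.1 hk i).2⟩⟩
  obtain ⟨t, ht⟩ := isCompact_Icc.elim_finite_subcover _
    (fun k => isOpen_set_pi finite_univ fun i _ => isOpen_Ioo) hcov
  have hsub : ((⟨a, b', fun i => (hb' i).1⟩ : Box (Fin n)) : Set (Fin n → ℝ)) ⊆
      ⋃ k ∈ t, ↑(⟨A' k, B k, hAB' k⟩ : Box (Fin n)) := by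
    intro p hp
    rw [Box.mem_coe, Box.mem_def] at hp
    obtain ⟨k, hk, hpk⟩ := mem_iUnion₂.1 (ht ⟨fun i => (hp i).1.le, fun i => (hp i).2⟩)
    exact mem_iUnion₂.2 ⟨k, hk, fun i => Ioo_subset_Ioc_self (hpk i (mem_univ i))⟩
  refine ⟨t, ?_⟩
  calc vol f a b ≤ vol f a b' + ε := by linarith
    _ ≤ ∑ k ∈ t, vol f (A' k) (B k) + ε := by gcongr; exact hf.vol_le_sum_of_subset_biUnion hsub
    _ ≤ ∑ k ∈ t, (vol f (A k) (B k) + δ k) + ε := by gcongr with k; exact hvA' k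

lemma ofReal_vol_le_tsum {a b : Fin n → ℝ} (hab : a ≤ b) {ι : Type*} [Countable ι]
    {A B : ι → Fin n → ℝ} (hAB : ∀ k, A k ≤ B k) (h : icoBox a b ⊆ ⋃ k, icoBox (A k) (B k)) :
    ENNReal.ofReal (vol f a b) ≤ ∑' k, ENNReal.ofReal (vol f (A k) (B k)) := by
  by_cases hdeg : ∃ i, a i = b i
  · obtain ⟨i, hi⟩ := hdeg
    simp [vol_eq_zero_of_eq f hi]
  simp only [not_exists] at hdeg
  refine ENNReal.le_of_forall_pos_le_add fun ε hε _ => ?_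
  have hε2 : (0 : ℝ) < ε / 2 := by positivity
  obtain ⟨δ, hδ, hδsum⟩ := ENNReal.exists_pos_sum_of_countable
    (ENNReal.ofReal_pos.2 hε2).ne' ι
  obtain ⟨t, ht⟩ := hf.exists_finset_vol_le_sum_add (fun i => (hab i).lt_of_ne (hdeg i)) hAB h
    hε2 fun k => NNReal.coe_pos.2 (hδ k)
  have hvol : ∀ k, 0 ≤ vol f (A k) (B k) := fun k => hf.vol_nonneg _ _ (hAB k)
  calc ENNReal.ofReal (vol f a b)
      ≤ ENNReal.ofReal (∑ k ∈ t, (vol f (A k) (B k) + δ k)) + ENNReal.ofReal (ε / 2) :=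
        (ENNReal.ofReal_le_ofReal ht).trans ENNReal.ofReal_add_le
    _ = ∑ k ∈ t, ENNReal.ofReal (vol f (A k) (B k)) + ∑ k ∈ t, (δ k : ℝ≥0∞) +
        ENNReal.ofReal (ε / 2) := by
        rw [ENNReal.ofReal_sum_of_nonneg (f := fun k => vol f (A k) (B k) + δ k)
          fun k _ => add_nonneg (hvol k) (δ k).coe_nonneg, ← Finset.sum_add_distrib]
        refine congrArg (· + _) (Finset.sum_congr rfl fun k _ => ?_)
        rw [ENNReal.ofReal_add (hvol k) (δ k).coe_nonneg, ENNReal.ofReal_coe_nnreal]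
    _ ≤ ∑' k, ENNReal.ofReal (vol f (A k) (B k)) + ENNReal.ofReal (ε / 2) +
        ENNReal.ofReal (ε / 2) := by
        gcongr
        · exact ENNReal.sum_le_tsum t
        · exact (ENNReal.sum_le_tsum t).trans hδsum.le
    _ = ∑' k, ENNReal.ofReal (vol f (A k) (B k)) + ε := by
        rw [add_assoc, ← ENNReal.ofReal_add hε2.le hε2.le, add_halves, ENNReal.ofReal_coe_nnreal]

end IsCDF

lemma le_of_subset_icoBox {S : Set (Fin n → ℝ)} (hS : S.Nonempty) {a b : Fin n → ℝ}
    (h : S ⊆ icoBox a b) : a ≤ b := by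
  obtain ⟨p, hp⟩ := hS
  exact fun i => ((mem_icoBox.1 (h hp) i).1.trans (mem_icoBox.1 (h hp) i).2.le)

open scoped Classical in
/-- The empty set is special-cased because in dimension `0` every box is the whole one-point space,
so no box has volume `0`. -/
noncomputable def boxCover (f : (Fin n → ℝ) → ℝ) (S : Set (Fin n → ℝ)) : ℝ≥0∞ :=
  if S = ∅ then 0 else ⨅ (a) (b) (_ : S ⊆ icoBox a b), ENNReal.ofReal (vol f a b)

lemma boxCover_empty (f : (Fin n → ℝ) → ℝ) : boxCover f ∅ = 0 := if_pos rfl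

lemma boxCover_of_nonempty (f : (Fin n → ℝ) → ℝ) {S : Set (Fin n → ℝ)} (hS : S.Nonempty) :
    boxCover f S = ⨅ (a) (b) (_ : S ⊆ icoBox a b), ENNReal.ofReal (vol f a b) :=
  if_neg hS.ne_empty

lemma boxCover_le (f : (Fin n → ℝ) → ℝ) {S : Set (Fin n → ℝ)} {a b : Fin n → ℝ}
    (h : S ⊆ icoBox a b) : boxCover f S ≤ ENNReal.ofReal (vol f a b) := by
  rcases S.eq_empty_or_nonempty with rfl | hS
  · simp [boxCover_empty]
  · rw [boxCover_of_nonempty f hS]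
    exact iInf₂_le_of_le a b (iInf_le _ h)

lemma exists_icoBox_of_boxCover_lt (f : (Fin n → ℝ) → ℝ) {S : Set (Fin n → ℝ)}
    (hS : S.Nonempty) {r : ℝ≥0∞} (h : boxCover f S < r) :
    ∃ a b, a ≤ b ∧ S ⊆ icoBox a b ∧ ENNReal.ofReal (vol f a b) < r := by
  simp only [boxCover_of_nonempty f hS, iInf_lt_iff] at h
  obtain ⟨a, b, hSab, hr⟩ := h
  exact ⟨a, b, le_of_subset_icoBox hS hSab, hSab, hr⟩

noncomputable def outer (f : (Fin n → ℝ) → ℝ) : OuterMeasure (Fin n → ℝ) :=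
  OuterMeasure.ofFunction (boxCover f) (boxCover_empty f)

lemma icoBox_inter_subset {a b : Fin n → ℝ} {i : Fin n} {c c' : ℝ} (hc' : min c (b i) ≤ c') :
    icoBox a b ∩ {p | p i < c} ⊆ icoBox a (update b i c') := by
  rintro p ⟨hp, hpc⟩
  refine mem_icoBox.2 fun j => ⟨(mem_icoBox.1 hp j).1, ?_⟩
  rcases eq_or_ne j i with rfl | hj
  · simpa using (lt_min hpc (mem_icoBox.1 hp j).2).trans_le hc'
  · simpa [hj] using (mem_icoBox.1 hp j).2

lemma icoBox_diff_subset {a b : Fin n → ℝ} {i : Fin n} {c c' : ℝ} (hc' : c' ≤ max (a i) c) :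
    icoBox a b \ {p | p i < c} ⊆ icoBox (update a i c') b := by
  rintro p ⟨hp, hpc⟩
  refine mem_icoBox.2 fun j => ⟨?_, (mem_icoBox.1 hp j).2⟩
  rcases eq_or_ne j i with rfl | hj
  · simpa using hc'.trans (max_le (mem_icoBox.1 hp j).1 (not_lt.1 hpc))
  · simpa [hj] using (mem_icoBox.1 hp j).1

lemma measurableSet_icoBox (a b : Fin n → ℝ) : MeasurableSet (icoBox a b) :=
  MeasurableSet.univ_pi fun _ => measurableSet_Ico

namespace IsCDF

variable {f : (Fin n → ℝ) → ℝ} (hf : IsCDF f)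
include hf

lemma ofReal_vol_le_outer {a b : Fin n → ℝ} (hab : a ≤ b) :
    ENNReal.ofReal (vol f a b) ≤ outer f (icoBox a b) := by
  rw [outer, OuterMeasure.ofFunction_apply]
  refine le_iInf₂ fun c hc => ENNReal.le_of_forall_pos_le_add fun ε hε hlt => ?_
  obtain ⟨δ, hδ, hδsum⟩ := ENNReal.exists_pos_sum_of_countable (ENNReal.coe_ne_zero.2 hε.ne') ℕ
  have hbox : ∀ k : {k // (c k).Nonempty}, ∃ A B, A ≤ B ∧ c k ⊆ icoBox A B ∧
      ENNReal.ofReal (vol f A B) < boxCover f (c k) + δ k := fun k =>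
    exists_icoBox_of_boxCover_lt f k.2 <| ENNReal.lt_add_right
      (ENNReal.ne_top_of_tsum_ne_top hlt.ne k) (ENNReal.coe_ne_zero.2 (hδ k).ne')
  choose A B hAB hcAB hvol using hbox
  have hcov : icoBox a b ⊆ ⋃ k, icoBox (A k) (B k) := fun p hp => by
    obtain ⟨k, hk⟩ := mem_iUnion.1 (hc hp)
    exact mem_iUnion.2 ⟨⟨k, p, hk⟩, hcAB _ hk⟩
  calc ENNReal.ofReal (vol f a b) ≤ ∑' k, ENNReal.ofReal (vol f (A k) (B k)) :=
        hf.ofReal_vol_le_tsum hab hAB hcov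
    _ ≤ ∑' k : {k // (c k).Nonempty}, (boxCover f (c k) + δ k) :=
        ENNReal.tsum_le_tsum fun k => (hvol k).le
    _ ≤ ∑' k, (boxCover f (c k) + δ k) :=
        ENNReal.tsum_comp_le_tsum_of_injective Subtype.val_injective _
    _ ≤ ∑' k, boxCover f (c k) + ε := by
        rw [ENNReal.tsum_add]
        gcongr

lemma outer_icoBox {a b : Fin n → ℝ} (hab : a ≤ b) :
    outer f (icoBox a b) = ENNReal.ofReal (vol f a b) :=
  le_antisymm ((OuterMeasure.ofFunction_le _).trans (boxCover_le f subset_rfl))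
    (hf.ofReal_vol_le_outer hab)

/-- Cutting the covering box along `{p i = c}` (moved into the box) splits its volume. -/
lemma isCaratheodory_setOf_lt (i : Fin n) (c : ℝ) :
    (outer f).IsCaratheodory {p | p i < c} := by
  refine OuterMeasure.ofFunction_caratheodory fun S => ?_
  rcases S.eq_empty_or_nonempty with rfl | hS
  · simp [boxCover_empty]
  rw [boxCover_of_nonempty f hS]
  refine le_iInf₂ fun a b => le_iInf fun hSab => ?_
  have hab := le_of_subset_icoBox hS hSab
  set c' := max (a i) (min c (b i))
  have hac' : a ≤ update b i c' := by
    refine fun j => ?_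
    rcases eq_or_ne j i with rfl | hj
    · simp [c']
    · simpa [hj] using hab j
  have hc'b : update a i c' ≤ b := by
    refine fun j => ?_
    rcases eq_or_ne j i with rfl | hj
    · simpa [c'] using hab j
    · simpa [hj] using hab j
  calc boxCover f (S ∩ {p | p i < c}) + boxCover f (S \ {p | p i < c})
      ≤ ENNReal.ofReal (vol f a (update b i c')) + ENNReal.ofReal (vol f (update a i c') b) :=
        add_le_add
          (boxCover_le f ((inter_subset_inter_left _ hSab).trans (icoBox_inter_subset
            (le_max_right _ _))))
          (boxCover_le f ((sdiff_subset_sdiff_left hSab).trans (icoBox_diff_subset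
            (max_le_max le_rfl (min_le_left _ _)))))
    _ = ENNReal.ofReal (vol f a b) := by
        rw [← ENNReal.ofReal_add (hf.vol_nonneg _ _ hac') (hf.vol_nonneg _ _ hc'b),
          ← vol_split]

lemma pi_le_caratheodory : MeasurableSpace.pi ≤ (outer f).caratheodory :=
  iSup_le fun i => measurable_iff_comap_le.1 <| measurable_of_Iio fun c =>
    hf.isCaratheodory_setOf_lt i c

/-- The Lebesgue–Stieltjes measure of `f`. -/
noncomputable def measure : Measure (Fin n → ℝ) :=
  (outer f).toMeasure hf.pi_le_caratheodory

lemma measure_icoBox {a b : Fin n → ℝ} (hab : a ≤ b) :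
    hf.measure (icoBox a b) = ENNReal.ofReal (vol f a b) := by
  rw [measure, toMeasure_apply _ _ (measurableSet_icoBox a b), hf.outer_icoBox hab]

end IsCDF

lemma exists_nat_forall_lt (p : Fin n → ℝ) : ∃ k : ℕ, ∀ i, p i < k := by
  obtain ⟨M, hM⟩ := (finite_range p).bddAbove
  obtain ⟨k, hk⟩ := exists_nat_gt M
  exact ⟨k, fun i => (hM ⟨i, rfl⟩).trans_lt hk⟩

lemma iUnion_icoBox_sub_natCast (s : Fin n → ℝ) :
    ⋃ k : ℕ, icoBox (fun i => s i - k) s = {p | ∀ i, p i < s i} := by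
  ext p
  simp only [mem_iUnion, mem_icoBox]
  refine ⟨fun ⟨k, hk⟩ i => (hk i).2, fun hp => ?_⟩
  obtain ⟨k, hk⟩ := exists_nat_forall_lt (s - p)
  exact ⟨k, fun i => ⟨by linarith [hk i, Pi.sub_apply s p i], hp i⟩⟩

lemma monotone_icoBox_sub_natCast (s : Fin n → ℝ) :
    Monotone fun k : ℕ => icoBox (fun i => s i - k) s := fun k l hkl p hp =>
  mem_icoBox.2 fun i => ⟨le_trans (by gcongr) (mem_icoBox.1 hp i).1, (mem_icoBox.1 hp i).2⟩

namespace IsCDF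

variable {f : (Fin n → ℝ) → ℝ} (hf : IsCDF f)
include hf

lemma measure_setOf_forall_lt (s : Fin n → ℝ) :
    hf.measure {p | ∀ i, p i < s i} = ENNReal.ofReal (f s) := by
  rw [← iUnion_icoBox_sub_natCast]
  refine tendsto_nhds_unique (tendsto_measure_iUnion_atTop (monotone_icoBox_sub_natCast s)) ?_
  have hbox : ∀ k : ℕ, hf.measure (icoBox (fun i => s i - k) s) =
      ENNReal.ofReal (vol f (fun i => s i - k) s) := fun k =>
    hf.measure_icoBox fun i => sub_le_self _ k.cast_nonneg
  simp only [Function.comp_def, hbox]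
  exact (ENNReal.continuous_ofReal.tendsto _).comp <| hf.tendsto_vol_atBot s fun i =>
    tendsto_atBot_add_const_left _ (s i) (tendsto_neg_atTop_atBot.comp tendsto_natCast_atTop_atTop)

lemma measureReal_setOf_forall_lt (s : Fin n → ℝ) :
    hf.measure.real {p | ∀ i, p i < s i} = f s := by
  rw [measureReal_def, hf.measure_setOf_forall_lt, ENNReal.toReal_ofReal (hf.nonneg s)]

lemma tendsto_atTop_one : Tendsto (fun k : ℕ => f fun _ => k) atTop (𝓝 1) := by
  refine tendsto_order.2 ⟨fun y hy => ?_, fun y hy => Eventually.of_forall fun k =>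
    (hf.le_one _).trans_lt hy⟩
  rw [← hf.iSup_eq_one] at hy
  obtain ⟨s, hys⟩ := exists_lt_of_lt_ciSup hy
  obtain ⟨m, hm⟩ := exists_nat_forall_lt s
  filter_upwards [eventually_ge_atTop m] with k hk
  exact hys.trans_le (hf.mono fun i => (hm i).le.trans (by exact_mod_cast hk))

lemma isProbabilityMeasure : IsProbabilityMeasure hf.measure := by
  have hmono : Monotone fun k : ℕ => {p : Fin n → ℝ | ∀ i, p i < k} := fun k l hkl p hp i =>
    (hp i).trans_le (by exact_mod_cast hkl)
  have hunion : ⋃ k : ℕ, {p : Fin n → ℝ | ∀ i, p i < k} = univ := by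
    exact eq_univ_of_forall fun p => mem_iUnion.2 (exists_nat_forall_lt p)
  have hlim := tendsto_measure_iUnion_atTop (μ := hf.measure) hmono
  have hray : ∀ k : ℕ, hf.measure {p | ∀ i, p i < k} = ENNReal.ofReal (f fun _ => k) :=
    fun k => hf.measure_setOf_forall_lt _
  simp only [hunion, Function.comp_def, hray] at hlim
  refine ⟨tendsto_nhds_unique hlim ?_⟩
  simpa [Function.comp_def] using (ENNReal.continuous_ofReal.tendsto _).comp hf.tendsto_atTop_one

end IsCDF

end MultiCDF

open Set MeasureTheory MeasurableSpace in
lemma range_setOf_forall_lt_eq {n : ℕ} :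
    range (fun s : Fin n → ℝ => {p : Fin n → ℝ | ∀ i, p i < s i}) =
      pi univ '' pi univ fun _ => range Iio := by
  ext S
  constructor
  · rintro ⟨s, rfl⟩
    exact ⟨fun i => Iio (s i), fun i _ => ⟨s i, rfl⟩, by ext; simp⟩
  · rintro ⟨t, ht, rfl⟩
    choose s hs using fun i => ht i (mem_univ i)
    exact ⟨s, by ext p; simp [← hs]⟩

open Set in
lemma isPiSystem_range_setOf_forall_lt {n : ℕ} :
    IsPiSystem (range fun s : Fin n → ℝ => {p : Fin n → ℝ | ∀ i, p i < s i}) := by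
  rw [range_setOf_forall_lt_eq]
  exact IsPiSystem.pi fun _ => isPiSystem_Iio

open Set MeasurableSpace in
lemma generateFrom_range_setOf_forall_lt {n : ℕ} :
    generateFrom (range fun s : Fin n → ℝ => {p : Fin n → ℝ | ∀ i, p i < s i}) =
      MeasurableSpace.pi := by
  rw [range_setOf_forall_lt_eq]
  refine generateFrom_eq_pi (fun _ => (borel_eq_generateFrom_Iio ℝ).symm) fun _ =>
    ⟨fun k : ℕ => Iio (k : ℝ), fun k => ⟨k, rfl⟩, ?_⟩
  exact eq_univ_of_forall fun x => mem_iUnion.2 (exists_nat_gt x)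

section Tribe

open Set Filter MeasureTheory Topology

variable {Ω α : Type*} {T : Set (Ω → ℝ)}

lemma IsEffectTribe.zero_mem (hT : IsEffectTribe T) : (fun _ => (0 : ℝ)) ∈ T := by
  simpa using hT.2.2.1 _ hT.2.1

lemma MeasureTheory.measureReal_iUnion_eq_ciSup [MeasurableSpace α] {μ : Measure α}
    [IsFiniteMeasure μ] {S : ℕ → Set α} (hS : Monotone S) :
    μ.real (⋃ k, S k) = ⨆ k, μ.real (S k) :=
  tendsto_nhds_unique ((ENNReal.tendsto_toReal (measure_ne_top _ _)).comp
    (tendsto_measure_iUnion_atTop hS)) (tendsto_atTop_ciSup (fun _ _ h => measureReal_mono (hS h))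
      ⟨μ.real univ, by rintro _ ⟨k, rfl⟩; exact measureReal_mono (subset_univ _)⟩)

lemma MeasurableSet.accumulate [MeasurableSpace α] {g : ℕ → Set α}
    (hg : ∀ i, MeasurableSet (g i)) (m : ℕ) : MeasurableSet (accumulate g m) :=
  .biUnion (to_countable _) fun i _ => hg i

/-- Dynkin's π-λ theorem: `T` is closed under complements, and countable disjoint unions are
increasing limits of finite ones. -/
lemma IsEffectTribe.measureReal_mem [MeasurableSpace α] (hT : IsEffectTribe T)
    (μ : Ω → Measure α) [∀ ω, IsProbabilityMeasure (μ ω)] {C : Set (Set α)}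
    (hgen : ‹MeasurableSpace α› = MeasurableSpace.generateFrom C) (hC : IsPiSystem C)
    (hCT : ∀ S ∈ C, (fun ω => (μ ω).real S) ∈ T) {S : Set α} (hS : MeasurableSet S) :
    (fun ω => (μ ω).real S) ∈ T := by
  have hzero := hT.zero_mem
  obtain ⟨-, -, hcompl, hadd, hsup⟩ := hT
  induction S, hS using MeasurableSpace.induction_on_inter hgen hC with
  | empty => simpa using hzero
  | basic S hS => exact hCT S hS
  | compl S hS ih => simpa [measureReal_compl hS] using hcompl _ ih
  | iUnion g hdisj hg ih =>
    have hacc : ∀ m, (fun ω => (μ ω).real (accumulate g m)) ∈ T := by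
      intro m
      induction m with
      | zero => simpa using ih 0
      | succ m ihm =>
        have hunion : ∀ ω, (μ ω).real (accumulate g (m + 1)) =
            (μ ω).real (accumulate g m) + (μ ω).real (g (m + 1)) := fun ω => by
          rw [accumulate_succ, measureReal_union (disjoint_accumulate hdisj m.lt_succ_self) (hg _)]
        simp only [hunion]
        exact hadd _ ihm _ (ih _) fun ω => by
          rw [le_sub_iff_add_le, ← hunion]; exact measureReal_le_one
    have := hsup _ hacc fun m ω => measureReal_mono (monotone_accumulate m.le_succ)
    simpa [← measureReal_iUnion_eq_ciSup monotone_accumulate] using this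

lemma isTribeObservable_measureReal {n : ℕ} (μ : Ω → Measure (Fin n → ℝ))
    [∀ ω, IsProbabilityMeasure (μ ω)]
    (hmem : ∀ S, MeasurableSet S → (fun ω => (μ ω).real S) ∈ T) :
    IsTribeObservable T fun S ω => (μ ω).real S.1 :=
  ⟨fun S => hmem S.1 S.2, funext fun ω => probReal_univ,
    fun _ S₂ hd ω => measureReal_union hd S₂.2,
    fun _ hS ω => (measureReal_iUnion_eq_ciSup hS).symm⟩

end Tribe

namespace IsTribeObservable

open Set Filter Function MeasureTheory Topology

variable {Ω : Type*} {T : Set (Ω → ℝ)} {n : ℕ}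
  {x : {S : Set (Fin n → ℝ) // MeasurableSet S} → Ω → ℝ}

lemma apply_empty (hx : IsTribeObservable T x) (ω : Ω) : x ⟨∅, .empty⟩ ω = 0 := by
  have := hx.2.2.1 ⟨∅, .empty⟩ ⟨∅, .empty⟩ (disjoint_empty _) ω
  simp only [union_empty] at this
  linarith

lemma apply_accumulate (hx : IsTribeObservable T x) {g : ℕ → Set (Fin n → ℝ)}
    (hg : ∀ i, MeasurableSet (g i)) (hd : Pairwise (Disjoint on g)) (ω : Ω) (m : ℕ) :
    x ⟨accumulate g m, .accumulate hg m⟩ ω = ∑ i ∈ Finset.range (m + 1), x ⟨g i, hg i⟩ ω := by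
  induction m with
  | zero => simp
  | succ m ih =>
    rw [Finset.sum_range_succ, ← ih, ← hx.2.2.1 _ ⟨_, hg _⟩ (disjoint_accumulate hd m.lt_succ_self)]
    simp only [accumulate_succ]

lemma hasSum_apply_iUnion (hT₀ : ∀ f ∈ T, ∀ ω, f ω ∈ Icc (0 : ℝ) 1)
    (hx : IsTribeObservable T x) {g : ℕ → Set (Fin n → ℝ)} (hg : ∀ i, MeasurableSet (g i))
    (hd : Pairwise (Disjoint on g)) (ω : Ω) :
    HasSum (fun i => x ⟨g i, hg i⟩ ω) (x ⟨⋃ i, g i, .iUnion hg⟩ ω) := by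
  have hnonneg : ∀ S, 0 ≤ x S ω := fun S => (hT₀ _ (hx.1 S) ω).1
  refine (hasSum_iff_tendsto_nat_of_nonneg (fun i => hnonneg _) _).2 <|
    (tendsto_add_atTop_iff_nat 1).1 ?_
  simp only [← hx.apply_accumulate hg hd ω]
  have hsup := hx.2.2.2 (fun m => ⟨accumulate g m, .accumulate hg m⟩) monotone_accumulate ω
  simp only [iUnion_accumulate] at hsup
  rw [← hsup]
  refine tendsto_atTop_ciSup (fun k l hkl => ?_) ⟨1, ?_⟩
  · simp only [hx.apply_accumulate hg hd ω]
    exact Finset.sum_le_sum_of_subset_of_nonneg (Finset.range_mono (by omega))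
      fun _ _ _ => hnonneg _
  · rintro _ ⟨m, rfl⟩
    exact (hT₀ _ (hx.1 _) ω).2

lemma exists_measure (hT₀ : ∀ f ∈ T, ∀ ω, f ω ∈ Icc (0 : ℝ) 1) (hx : IsTribeObservable T x)
    (ω : Ω) : ∃ ν : Measure (Fin n → ℝ), IsFiniteMeasure ν ∧ ∀ S, ν.real S.1 = x S ω := by
  have hnonneg : ∀ S, 0 ≤ x S ω := fun S => (hT₀ _ (hx.1 S) ω).1
  let ν : Measure (Fin n → ℝ) := Measure.ofMeasurable (fun S hS => ENNReal.ofReal (x ⟨S, hS⟩ ω))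
    (by simp only [hx.apply_empty ω, ENNReal.ofReal_zero]) fun g hg hd => by
      have hsum := IsTribeObservable.hasSum_apply_iUnion hT₀ hx hg hd ω
      rw [← ENNReal.ofReal_tsum_of_nonneg (fun i => hnonneg _) hsum.summable, hsum.tsum_eq]
  have hν : ∀ S : {S : Set (Fin n → ℝ) // MeasurableSet S}, ν S.1 = ENNReal.ofReal (x S ω) :=
    fun S => Measure.ofMeasurable_apply _ S.2
  refine ⟨ν, ⟨by simp [hν ⟨univ, .univ⟩]⟩, fun S => ?_⟩
  rw [measureReal_def, hν, ENNReal.toReal_ofReal (hnonneg S)]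

/-- Both sides are finite measures in `S` that agree on the generating π-system of rays. -/
lemma apply_eq_measureReal (hT₀ : ∀ f ∈ T, ∀ ω, f ω ∈ Icc (0 : ℝ) 1)
    (hx : IsTribeObservable T x) {ω : Ω} (μ : Measure (Fin n → ℝ)) [IsProbabilityMeasure μ]
    (hray : ∀ s, x ⟨{p | ∀ i, p i < s i}, ray_measurableSet s⟩ ω = μ.real {p | ∀ i, p i < s i})
    (S : {S : Set (Fin n → ℝ) // MeasurableSet S}) : x S ω = μ.real S.1 := by
  obtain ⟨ν, _, hνx⟩ := hx.exists_measure hT₀ ω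
  have hunivν : ν univ = 1 := by
    rw [← ofReal_measureReal, hνx ⟨univ, .univ⟩, hx.2.1, ENNReal.ofReal_one]
  have hνμ : ν = μ := by
    refine ext_of_generate_finite _ generateFrom_range_setOf_forall_lt.symm
      isPiSystem_range_setOf_forall_lt ?_ (by rw [hunivν, measure_univ])
    rintro _ ⟨s, rfl⟩
    rw [← ofReal_measureReal, ← ofReal_measureReal (μ := μ), hνx ⟨_, ray_measurableSet s⟩, hray]
  rw [← hνx, hνμ]

end IsTribeObservable

lemma IsTribeSpectralResolution.isCDF {n : ℕ} {Ω : Type*} {T : Set (Ω → ℝ)}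
    {F : (Fin n → ℝ) → Ω → ℝ} (hT : IsEffectTribe T) (hF : IsTribeSpectralResolution T F)
    (ω : Ω) : MultiCDF.IsCDF fun s => F s ω where
  nonneg s := (hT.1 _ (hF.1 s) ω).1
  le_one s := (hT.1 _ (hF.1 s) ω).2
  mono s t h := hF.2.1 s t h ω
  iSup_eq_one := hF.2.2.1 ω
  iSup_lt_eq t := hF.2.2.2.1 t ω
  iInf_update_eq_zero i t := hF.2.2.2.2.1 i t ω
  vol_nonneg a b h := hF.2.2.2.2.2 a b h ω

theorem tribe_spectral_resolution_extends_to_observable_general {n : ℕ} {Ω : Type*}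
    (T : Set (Ω → ℝ)) (hT : IsEffectTribe T)
    (F : (Fin n → ℝ) → Ω → ℝ) (hF : IsTribeSpectralResolution T F) :
    ∃! x : {S : Set (Fin n → ℝ) // MeasurableSet S} → Ω → ℝ,
      IsTribeObservable T x ∧
      ∀ s : Fin n → ℝ,
        x ⟨{p | ∀ i, p i < s i}, ray_measurableSet s⟩ = F s := by
  have hcdf := hF.isCDF hT
  let μ : Ω → MeasureTheory.Measure (Fin n → ℝ) := fun ω => (hcdf ω).measure
  have : ∀ ω, MeasureTheory.IsProbabilityMeasure (μ ω) := fun ω => (hcdf ω).isProbabilityMeasure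
  have hray : ∀ s ω, (μ ω).real {p | ∀ i, p i < s i} = F s ω := fun s ω =>
    (hcdf ω).measureReal_setOf_forall_lt s
  have hmem : ∀ S, MeasurableSet S → (fun ω => (μ ω).real S) ∈ T := fun S hS =>
    hT.measureReal_mem μ generateFrom_range_setOf_forall_lt.symm isPiSystem_range_setOf_forall_lt
      (by rintro _ ⟨s, rfl⟩; simpa only [hray] using hF.1 s) hS
  refine ⟨fun S ω => (μ ω).real S.1,
    ⟨isTribeObservable_measureReal μ hmem, fun s => funext (hray s)⟩, ?_⟩
  rintro y ⟨hy, hyF⟩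
  funext S ω
  exact hy.apply_eq_measureReal hT.1 (μ ω) (fun s => by rw [hyF, hray]) S

/-- For every `n`-dimensional spectral resolution `F` into an effect-tribe `T` there
is a unique `n`-dimensional observable `x` on `T` with
`x((−∞,s₁)×⋯×(−∞,sₙ)) = F(s₁,…,sₙ)`. -/
theorem tribe_spectral_resolution_extends_to_observable {n : ℕ} {Ω : Type*}
    [Nonempty Ω] (T : Set (Ω → ℝ)) (hT : IsEffectTribe T)
    (F : (Fin n → ℝ) → Ω → ℝ) (hF : IsTribeSpectralResolution T F) :
    ∃! x : {S : Set (Fin n → ℝ) // MeasurableSet S} → Ω → ℝ,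
      IsTribeObservable T x ∧
      ∀ s : Fin n → ℝ,
        x ⟨{p | ∀ i, p i < s i}, ray_measurableSet s⟩ = F s :=
  tribe_spectral_resolution_extends_to_observable_general T hT F hF
end
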